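/- arXiv:1012.0342 — 7 statements merged into one kernel-verified Lean document; each statement's English description precedes it below -/
import Mathlib

section
/- Let m be a positive integer, C > 0, and let f : {0, 1, …, m} → ℝ be nonnegative and satisfy f(k) ≤ C · f(k−1)^{1/2} · f(k+1)^{1/2} for all 0 < k < m. Then for all 0 ≤ k ≤ m one has f(k) ≤ C^{k(m−k)} · f(0)^{1−k/m} · f(m)^{k/m}. -/
/-!
Taking logarithms turns the hypothesis into discrete convexity of
`log f k - k (m - k) log C`, since `k (m - k)` has second difference `-2`. A discrete convex
sequence lies below its chord (maximum principle), which is the claim after exponentiating.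
If some value of `f` vanishes, the hypothesis propagates the zero to every interior point.
-/

open Real

section DiscreteConvex

variable {α : Type*} [Field α] [LinearOrder α] [IsStrictOrderedRing α]

theorem nonpos_of_discrete_convex {m : ℕ} {u : ℕ → α} (h0 : u 0 ≤ 0) (hm : u m ≤ 0)
    (hconv : ∀ k, 0 < k → k < m → 2 * u k ≤ u (k - 1) + u (k + 1)) :
    ∀ k ≤ m, u k ≤ 0 := by
  obtain ⟨b, hb, hb_max⟩ := Finset.exists_max_image (Finset.range (m + 1)) u ⟨0, by simp⟩
  have hbm : b ≤ m := Nat.lt_succ_iff.mp (Finset.mem_range.mp hb)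
  have le_ub : ∀ j ≤ m, u j ≤ u b := fun j hj => hb_max j (by simpa [Nat.lt_succ_iff])
  intro k hk
  by_contra! hk_pos
  have hub : 0 < u b := hk_pos.trans_le (le_ub k hk)
  have hb0 : 0 < b := Nat.pos_of_ne_zero fun h => by subst h; linarith
  -- a positive maximum at an interior point spreads to the right, up to `m`
  have hconst : ∀ j, b ≤ j → j ≤ m → u j = u b := by
    intro j hj
    induction j, hj using Nat.le_induction with
    | base => exact fun _ => rfl
    | succ j hbj ih =>
      intro hjm
      have huj := ih (by omega)
      have hconv_j := hconv j (by omega) (by omega)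
      linarith [le_ub (j - 1) (by omega), le_ub (j + 1) hjm]
  linarith [hconst m hbm le_rfl]

theorem le_interpolate_of_discrete_convex {m : ℕ} {u : ℕ → α}
    (hconv : ∀ k, 0 < k → k < m → 2 * u k ≤ u (k - 1) + u (k + 1)) :
    ∀ k ≤ m, u k ≤ (1 - (k : α) / m) * u 0 + (k : α) / m * u m := by
  rcases Nat.eq_zero_or_pos m with rfl | hm
  · intro k hk
    obtain rfl : k = 0 := Nat.le_zero.mp hk
    simp
  have hm' : (m : α) ≠ 0 := by positivity
  intro k hk
  have key := nonpos_of_discrete_convex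
    (u := fun j => u j - ((1 - (j : α) / m) * u 0 + (j : α) / m * u m))
    (by simp) (by simp [div_self hm']) ?_ k hk
  · simpa [sub_nonpos] using key
  intro j hj0 hjm
  have hconv_j := hconv j hj0 hjm
  simp only [Nat.cast_sub (Nat.one_le_iff_ne_zero.mpr hj0.ne'), Nat.cast_add, Nat.cast_one]
  have haffine : (1 - ((j : α) - 1) / m) * u 0 + ((j : α) - 1) / m * u m
      + ((1 - ((j : α) + 1) / m) * u 0 + ((j : α) + 1) / m * u m)
      = 2 * ((1 - (j : α) / m) * u 0 + (j : α) / m * u m) := by ring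
  linarith

end DiscreteConvex

theorem Nat.forall_interior_of_spread {P : ℕ → Prop} {m j : ℕ} (hj : P j) (hjm : j ≤ m)
    (hspread : ∀ k, 0 < k → k < m → P (k - 1) ∨ P (k + 1) → P k) :
    ∀ k, 0 < k → k < m → P k := by
  intro k hk0 hkm
  rcases le_total j k with hjk | hkj
  · clear hk0
    induction k, hjk using Nat.le_induction with
    | base => exact hj
    | succ i hji ih => exact hspread (i + 1) i.succ_pos hkm (Or.inl (ih (by omega)))
  · clear hkm
    induction hkj using Nat.decreasingInduction with
    | self => exact hj
    | of_succ i hij ih => exact hspread i hk0 (by omega) (Or.inr (ih i.succ_pos))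

section Hamilton

variable {m : ℕ} {C : ℝ} {f : ℕ → ℝ}

theorem eq_zero_of_interior_of_eq_zero (hf : ∀ k ≤ m, 0 ≤ f k)
    (hrec : ∀ k, 0 < k → k < m →
      f k ≤ C * f (k - 1) ^ ((1 : ℝ) / 2) * f (k + 1) ^ ((1 : ℝ) / 2))
    {j : ℕ} (hjm : j ≤ m) (hfj : f j = 0) :
    ∀ k, 0 < k → k < m → f k = 0 := by
  refine Nat.forall_interior_of_spread hfj hjm fun k hk0 hkm hnb => ?_
  refine le_antisymm ?_ (hf k hkm.le)
  have half_ne : (1 : ℝ) / 2 ≠ 0 := by norm_num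
  rcases hnb with h | h <;> simpa [h, zero_rpow half_ne] using hrec k hk0 hkm

theorem le_hamilton_bound_of_pos (hC : 0 < C) (hpos : ∀ k ≤ m, 0 < f k)
    (hrec : ∀ k, 0 < k → k < m →
      f k ≤ C * f (k - 1) ^ ((1 : ℝ) / 2) * f (k + 1) ^ ((1 : ℝ) / 2)) :
    ∀ k ≤ m, f k ≤ C ^ (k * (m - k)) * f 0 ^ (1 - (k : ℝ) / m) * f m ^ ((k : ℝ) / m) := by
  set u : ℕ → ℝ := fun k => log (f k) - k * (m - k) * log C with hu
  have hconv : ∀ k, 0 < k → k < m → 2 * u k ≤ u (k - 1) + u (k + 1) := by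
    intro k hk0 hkm
    have hf_pred := hpos (k - 1) (by omega)
    have hf_succ := hpos (k + 1) hkm
    have hlog := log_le_log (hpos k hkm.le) (hrec k hk0 hkm)
    rw [log_mul (by positivity) (by positivity), log_mul hC.ne' (by positivity),
      log_rpow hf_pred, log_rpow hf_succ] at hlog
    simp only [hu, Nat.cast_sub (Nat.one_le_iff_ne_zero.mpr hk0.ne'), Nat.cast_add,
      Nat.cast_one]
    linarith
  intro k hk
  have hinterp := le_interpolate_of_discrete_convex hconv k hk
  simp only [hu, Nat.cast_zero, zero_mul, sub_zero, sub_self, mul_zero] at hinterp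
  calc f k = exp (log (f k)) := (exp_log (hpos k hk)).symm
    _ ≤ exp (k * (m - k) * log C + (1 - (k : ℝ) / m) * log (f 0) + k / m * log (f m)) :=
      exp_le_exp.mpr (by linarith)
    _ = C ^ (k * (m - k)) * f 0 ^ (1 - (k : ℝ) / m) * f m ^ ((k : ℝ) / m) := by
      rw [← rpow_natCast, rpow_def_of_pos hC, rpow_def_of_pos (hpos 0 m.zero_le),
        rpow_def_of_pos (hpos m le_rfl), ← exp_add, ← exp_add, Nat.cast_mul, Nat.cast_sub hk]
      ring_nf

end Hamilton

theorem stmt1_general (m : ℕ) (C : ℝ) (hC : 0 < C) (f : ℕ → ℝ)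
    (hf : ∀ k, k ≤ m → 0 ≤ f k)
    (hrec : ∀ k, 0 < k → k < m →
      f k ≤ C * (f (k - 1)) ^ ((1 : ℝ) / 2) * (f (k + 1)) ^ ((1 : ℝ) / 2)) :
    ∀ k, k ≤ m →
      f k ≤ C ^ (k * (m - k)) * (f 0) ^ (1 - (k : ℝ) / m) * (f m) ^ ((k : ℝ) / m) := by
  by_cases hpos : ∀ j ≤ m, 0 < f j
  · exact le_hamilton_bound_of_pos hC hpos hrec
  push Not at hpos
  obtain ⟨j, hjm, hfj⟩ := hpos
  intro k hk
  rcases Nat.eq_zero_or_pos k with rfl | hk0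
  · simp
  rcases hk.eq_or_lt with rfl | hkm
  · simp [hk0.ne']
  rw [eq_zero_of_interior_of_eq_zero hf hrec hjm (le_antisymm hfj (hf j hjm)) k hk0 hkm]
  exact mul_nonneg (mul_nonneg (pow_nonneg hC.le _) (rpow_nonneg (hf 0 m.zero_le) _))
    (rpow_nonneg (hf m le_rfl) _)

theorem stmt1 (m : ℕ) (hm : 0 < m) (C : ℝ) (hC : 0 < C) (f : ℕ → ℝ)
    (hf : ∀ k, k ≤ m → 0 ≤ f k)
    (hrec : ∀ k, 0 < k → k < m →
      f k ≤ C * (f (k - 1)) ^ ((1 : ℝ) / 2) * (f (k + 1)) ^ ((1 : ℝ) / 2)) :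
    ∀ k, k ≤ m →
      f k ≤ C ^ (k * (m - k)) * (f 0) ^ (1 - (k : ℝ) / m) * (f m) ^ ((k : ℝ) / m) :=
  stmt1_general m C hC f hf hrec
end

section
/- Let n ≥ 1 and let u, v be symmetric real n×n matrices. Then ‖u∧v‖² = ‖u‖²‖v‖² + ⟨u,v⟩² − 2⟨u∘u, v∘v⟩, where u∧v is the Kulkarni–Nomizu product, the norm on 4-index arrays is the (1/4)-normalized one, and ⟨·,·⟩, ‖·‖ on matrices denote the Frobenius inner product and norm. -/
open Matrix

/-- The Kulkarni–Nomizu product of two `n × n` real matrices, as a 4-index array. -/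
def kulkarniNomizu {n : ℕ} (u v : Matrix (Fin n) (Fin n) ℝ) :
    Fin n → Fin n → Fin n → Fin n → ℝ :=
  fun i j k l => u i k * v j l + u j l * v i k - u i l * v j k - u j k * v i l

/-- The (1/4)-normalized inner product on 4-index real arrays. -/
noncomputable def inner4 {n : ℕ} (S T : Fin n → Fin n → Fin n → Fin n → ℝ) : ℝ :=
  (1 / 4) * ∑ i, ∑ j, ∑ k, ∑ l, S i j k l * T i j k l

/-- The Frobenius inner product of two real matrices. -/
def frob {n : ℕ} (u v : Matrix (Fin n) (Fin n) ℝ) : ℝ := ∑ i, ∑ j, u i j * v i j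

lemma sum_comm4 {n : ℕ} (f : Fin n → Fin n → Fin n → Fin n → ℝ) :
    ∑ i, ∑ j, ∑ k, ∑ l, f i j k l = ∑ k, ∑ l, ∑ i, ∑ j, f i j k l := by
  calc ∑ i, ∑ j, ∑ k, ∑ l, f i j k l
      = ∑ i, ∑ k, ∑ j, ∑ l, f i j k l :=
        Finset.sum_congr rfl fun i _ => Finset.sum_comm
    _ = ∑ k, ∑ i, ∑ j, ∑ l, f i j k l := Finset.sum_comm
    _ = ∑ k, ∑ i, ∑ l, ∑ j, f i j k l :=
        Finset.sum_congr rfl fun k _ => Finset.sum_congr rfl fun i _ => Finset.sum_comm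
    _ = ∑ k, ∑ l, ∑ i, ∑ j, f i j k l :=
        Finset.sum_congr rfl fun k _ => Finset.sum_comm

lemma L1 {n : ℕ} (f g : Fin n → Fin n → ℝ) :
    ∑ i, ∑ j, ∑ k, ∑ l, f i k * g j l = (∑ i, ∑ j, f i j) * (∑ i, ∑ j, g i j) := by
  simp_rw [Finset.sum_mul_sum]

lemma L1' {n : ℕ} (f g : Fin n → Fin n → ℝ) :
    ∑ i, ∑ j, ∑ k, ∑ l, f i l * g j k = (∑ i, ∑ j, f i j) * (∑ i, ∑ j, g i j) := by
  have h : ∀ i j : Fin n, (∑ k, ∑ l, f i l * g j k) = ∑ k, ∑ l, f i k * g j l :=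
    fun i j => Finset.sum_comm
  simp_rw [h]
  exact L1 f g

theorem stmt2 (n : ℕ) (hn : 1 ≤ n) (u v : Matrix (Fin n) (Fin n) ℝ)
    (hu : u.IsSymm) (hv : v.IsSymm) :
    inner4 (kulkarniNomizu u v) (kulkarniNomizu u v) =
      frob u u * frob v v + (frob u v) ^ 2 - 2 * frob (u * u) (v * v) := by
  have hu' : ∀ i j, u i j = u j i := fun i j => (hu.apply i j).symm
  have hv' : ∀ i j, v i j = v j i := fun i j => (hv.apply i j).symm
  -- matrix square entries, two ways
  have hmu1 : ∀ k l, (u * u) k l = ∑ i, u i k * u i l := by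
    intro k l
    rw [Matrix.mul_apply]
    exact Finset.sum_congr rfl fun m _ => by rw [hu' k m]
  have hmv1 : ∀ k l, (v * v) k l = ∑ i, v i k * v i l := by
    intro k l
    rw [Matrix.mul_apply]
    exact Finset.sum_congr rfl fun m _ => by rw [hv' k m]
  have hmu2 : ∀ i j, (u * u) i j = ∑ k, u i k * u j k := by
    intro i j
    rw [Matrix.mul_apply]
    exact Finset.sum_congr rfl fun m _ => by rw [hu' m j]
  have hmv2 : ∀ i j, (v * v) i j = ∑ k, v i k * v j k := by
    intro i j
    rw [Matrix.mul_apply]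
    exact Finset.sum_congr rfl fun m _ => by rw [hv' m j]
  have e1 : ∑ i, ∑ j, ∑ k, ∑ l, (u i k * u i k) * (v j l * v j l)
      = frob u u * frob v v := L1 _ _
  have e2 : ∑ i, ∑ j, ∑ k, ∑ l, (v i k * v i k) * (u j l * u j l)
      = frob v v * frob u u := L1 _ _
  have e3 : ∑ i, ∑ j, ∑ k, ∑ l, (u i l * u i l) * (v j k * v j k)
      = frob u u * frob v v := L1' _ _
  have e4 : ∑ i, ∑ j, ∑ k, ∑ l, (v i l * v i l) * (u j k * u j k)
      = frob v v * frob u u := L1' _ _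
  have e5 : ∑ i, ∑ j, ∑ k, ∑ l, (u i k * v i k) * (u j l * v j l)
      = frob u v * frob u v := L1 _ _
  have e6 : ∑ i, ∑ j, ∑ k, ∑ l, (u i l * v i l) * (u j k * v j k)
      = frob u v * frob u v := L1' _ _
  have e7 : ∑ i, ∑ j, ∑ k, ∑ l, (u i k * u i l) * (v j k * v j l)
      = frob (u * u) (v * v) := by
    rw [sum_comm4]
    refine Finset.sum_congr rfl fun k _ => Finset.sum_congr rfl fun l _ => ?_
    rw [hmu1, hmv1, Finset.sum_mul_sum]
  have e8 : ∑ i, ∑ j, ∑ k, ∑ l, (u i k * u j k) * (v i l * v j l)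
      = frob (u * u) (v * v) := by
    refine Finset.sum_congr rfl fun i _ => Finset.sum_congr rfl fun j _ => ?_
    rw [hmu2, hmv2, Finset.sum_mul_sum]
  have e9 : ∑ i, ∑ j, ∑ k, ∑ l, (u i l * u j l) * (v i k * v j k)
      = frob (u * u) (v * v) := by
    refine Finset.sum_congr rfl fun i _ => Finset.sum_congr rfl fun j _ => ?_
    rw [Finset.sum_comm, hmu2, hmv2, Finset.sum_mul_sum]
  have e10 : ∑ i, ∑ j, ∑ k, ∑ l, (u j k * u j l) * (v i k * v i l)
      = frob (u * u) (v * v) := by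
    rw [sum_comm4]
    refine Finset.sum_congr rfl fun k _ => Finset.sum_congr rfl fun l _ => ?_
    rw [Finset.sum_comm, hmu1, hmv1, Finset.sum_mul_sum]
  have expand : (∑ i, ∑ j, ∑ k, ∑ l,
      kulkarniNomizu u v i j k l * kulkarniNomizu u v i j k l)
      = ∑ i, ∑ j, ∑ k, ∑ l,
        ((u i k * u i k) * (v j l * v j l) + (v i k * v i k) * (u j l * u j l)
        + (u i l * u i l) * (v j k * v j k) + (v i l * v i l) * (u j k * u j k)
        + (u i k * v i k) * (u j l * v j l) + (u i k * v i k) * (u j l * v j l)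
        + (u i l * v i l) * (u j k * v j k) + (u i l * v i l) * (u j k * v j k)
        - (u i k * u i l) * (v j k * v j l) - (u i k * u i l) * (v j k * v j l)
        - (u i k * u j k) * (v i l * v j l) - (u i k * u j k) * (v i l * v j l)
        - (u i l * u j l) * (v i k * v j k) - (u i l * u j l) * (v i k * v j k)
        - (u j k * u j l) * (v i k * v i l) - (u j k * u j l) * (v i k * v i l)) := by
    refine Finset.sum_congr rfl fun i _ => Finset.sum_congr rfl fun j _ =>
      Finset.sum_congr rfl fun k _ => Finset.sum_congr rfl fun l _ => ?_
    unfold kulkarniNomizu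
    ring
  unfold inner4
  rw [expand]
  simp only [Finset.sum_add_distrib, Finset.sum_sub_distrib]
  rw [e1, e2, e3, e4, e5, e6, e7, e8, e9, e10]
  ring
end

section
/- Let n ≥ 2 and let a be a real number with a < 1/(2(n−1)). Then the constant c := (1 − 2·max(a,0)·(n−1))/2 is positive, and for every ξ ∈ ℝⁿ and every symmetric real n×n matrix h, setting R_ξ := ξξᵀ − |ξ|²·I, one has (1/2)|ξ|⁴‖h‖² − a·⟨R_ξ, h⟩² ≥ c·|ξ|⁴‖h‖², where ⟨·,·⟩ and ‖·‖ denote the Frobenius inner product and norm. -/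
open Matrix

lemma frob_cs {n : ℕ} (u v : Matrix (Fin n) (Fin n) ℝ) :
    (frob u v) ^ 2 ≤ frob u u * frob v v := by
  unfold frob
  simp_rw [← Fintype.sum_prod_type', ← sq]
  exact Finset.sum_mul_sq_le_sq_mul_sq Finset.univ
    (fun p : Fin n × Fin n => u p.1 p.2) (fun p : Fin n × Fin n => v p.1 p.2)

lemma frob_nonneg {n : ℕ} (u : Matrix (Fin n) (Fin n) ℝ) : 0 ≤ frob u u :=
  Finset.sum_nonneg fun i _ => Finset.sum_nonneg fun j _ => mul_self_nonneg _

theorem stmt6 (n : ℕ) (hn : 2 ≤ n) (a : ℝ) (ha : a < 1 / (2 * ((n : ℝ) - 1))) :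
    0 < (1 - 2 * max a 0 * ((n : ℝ) - 1)) / 2 ∧
    ∀ (ξ : Fin n → ℝ) (h : Matrix (Fin n) (Fin n) ℝ), h.IsSymm →
      (1 / 2) * (∑ k, ξ k ^ 2) ^ 2 * frob h h -
          a * (frob (Matrix.of fun i j =>
            ξ i * ξ j - (∑ k, ξ k ^ 2) * (1 : Matrix (Fin n) (Fin n) ℝ) i j) h) ^ 2 ≥
        ((1 - 2 * max a 0 * ((n : ℝ) - 1)) / 2) * (∑ k, ξ k ^ 2) ^ 2 * frob h h := by
  have hn1 : (0:ℝ) < 2 * ((n:ℝ) - 1) := by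
    have : (2:ℝ) ≤ n := by exact_mod_cast hn
    linarith
  have ha' : a * (2 * ((n:ℝ) - 1)) < 1 := by
    rw [← lt_div_iff₀ hn1]; exact ha
  constructor
  · rcases le_or_gt a 0 with h0 | h0
    · rw [max_eq_right h0]; norm_num
    · rw [max_eq_left h0.le]; nlinarith
  · intro ξ h _
    set s : ℝ := ∑ k, ξ k ^ 2 with hs
    set R : Matrix (Fin n) (Fin n) ℝ :=
      Matrix.of fun i j => ξ i * ξ j - s * (1 : Matrix (Fin n) (Fin n) ℝ) i j with hR
    have hs0 : 0 ≤ s := Finset.sum_nonneg fun k _ => sq_nonneg _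
    have hh0 : 0 ≤ frob h h := frob_nonneg h
    have hRR : frob R R = ((n:ℝ) - 1) * s ^ 2 := by
      have row : ∀ i, (∑ j, R i j * R i j) = (ξ i) ^ 2 * s - 2 * s * (ξ i) ^ 2 + s ^ 2 := by
        intro i
        have hterm : ∀ j, R i j * R i j =
            (ξ i) ^ 2 * (ξ j) ^ 2 + (if i = j then s ^ 2 - 2 * s * (ξ i) ^ 2 else 0) := by
          intro j
          by_cases hij : i = j <;> simp [hR, Matrix.one_apply, hij] <;> ring
        simp_rw [hterm, Finset.sum_add_distrib, Finset.sum_ite_eq, Finset.mem_univ,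
          if_true, ← Finset.mul_sum, ← hs]
        ring
      unfold frob
      simp_rw [row, Finset.sum_add_distrib, Finset.sum_sub_distrib, ← Finset.sum_mul,
        ← Finset.mul_sum, ← hs, Finset.sum_const, Finset.card_univ, Fintype.card_fin,
        nsmul_eq_mul]
      ring
    have hCS : (frob R h) ^ 2 ≤ ((n:ℝ) - 1) * s ^ 2 * frob h h := by
      calc (frob R h) ^ 2 ≤ frob R R * frob h h := frob_cs R h
        _ = ((n:ℝ) - 1) * s ^ 2 * frob h h := by rw [hRR]
    rcases le_or_gt a 0 with h0 | h0
    · rw [max_eq_right h0]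
      have : 0 ≤ -a * (frob R h) ^ 2 := mul_nonneg (by linarith) (sq_nonneg _)
      nlinarith [mul_nonneg (mul_nonneg hs0 hs0) hh0]
    · rw [max_eq_left h0.le]
      nlinarith [mul_le_mul_of_nonneg_left hCS h0.le]
end

section
/- Let (X,d) be a nonempty, connected, proper metric space and let μ be a Borel measure on X that is finite on bounded sets and satisfies inf_{x∈X} μ(B(x,1)) > 0, where B(x,1) is the open ball of radius 1. Then X is compact if and only if μ(X) < ∞. -/
open MeasureTheory

theorem stmt7 {X : Type*} [MetricSpace X] [ProperSpace X] [Nonempty X] [ConnectedSpace X]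
    [MeasurableSpace X] [BorelSpace X] (μ : Measure X)
    (hfin : ∀ s : Set X, Bornology.IsBounded s → μ s < ⊤)
    (hinf : 0 < ⨅ x : X, μ (Metric.ball x 1)) :
    CompactSpace X ↔ μ Set.univ < ⊤ := by
  constructor
  · intro h
    exact hfin _ isCompact_univ.isBounded
  · intro hμ
    rw [Metric.compactSpace_iff_isBounded_univ]
    by_contra hb
    obtain ⟨x₀⟩ := ‹Nonempty X›
    have key : ∀ k : ℕ, ∃ y : X, dist x₀ y = 3 * k := by
      intro k
      obtain ⟨z, hz⟩ : ∃ z : X, (3 : ℝ) * k < dist x₀ z := by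
        by_contra h
        push_neg at h
        exact hb ((Metric.isBounded_iff_subset_closedBall x₀).2
          ⟨3 * k, fun y _ => by simpa [Metric.mem_closedBall, dist_comm] using h y⟩)
      have hmem : (3 : ℝ) * k ∈ Set.Icc (dist x₀ x₀) (dist x₀ z) := by
        constructor
        · simp
        · exact hz.le
      obtain ⟨y, hy⟩ := intermediate_value_univ x₀ z
        (Continuous.dist continuous_const continuous_id) hmem
      exact ⟨y, hy⟩
    choose x hx using key
    have hdist : ∀ j k : ℕ, j < k → (2 : ℝ) ≤ dist (x j) (x k) := by
      intro j k hjk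
      have h1 : dist x₀ (x k) ≤ dist x₀ (x j) + dist (x j) (x k) := dist_triangle _ _ _
      rw [hx j, hx k] at h1
      have h2 : (3 : ℝ) * j + 3 ≤ 3 * k := by
        have : (j : ℝ) + 1 ≤ k := by exact_mod_cast hjk
        linarith
      linarith
    have hd : Pairwise (Function.onFun Disjoint fun k => Metric.ball (x k) 1) := by
      intro j k hjk
      rcases hjk.lt_or_gt with h | h
      · exact Metric.ball_disjoint_ball (by linarith [hdist j k h])
      · exact (Metric.ball_disjoint_ball (by linarith [hdist k j h])).symm
    have hsum : (∑' k : ℕ, μ (Metric.ball (x k) 1)) = μ (⋃ k, Metric.ball (x k) 1) :=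
      (measure_iUnion hd fun k => measurableSet_ball).symm
    have hbig : (⊤ : ENNReal) ≤ ∑' k : ℕ, μ (Metric.ball (x k) 1) := by
      calc (⊤ : ENNReal) = ∑' _ : ℕ, (⨅ y : X, μ (Metric.ball y 1)) :=
            (ENNReal.tsum_const_eq_top_of_ne_zero hinf.ne').symm
        _ ≤ _ := ENNReal.tsum_le_tsum fun k => iInf_le _ _
    have : μ Set.univ = ⊤ := by
      refine top_le_iff.mp ?_
      calc (⊤ : ENNReal) ≤ _ := hbig
        _ = _ := hsum
        _ ≤ μ Set.univ := measure_mono (Set.subset_univ _)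
    exact absurd hμ (by simp [this])
end

section
/- Let n ≥ 3 and let (A,B) be an admissible Sobolev pair for ℝⁿ. Then for every τ > 0, every q > 2, and every nonnegative smooth compactly supported u : ℝⁿ → ℝ: ‖u‖_{(1+τ)·2n/(n−2)} ≤ (1+τ)^{1/(1+τ)} · ‖u‖_{2qτ/(q−2)}^{τ/(1+τ)} · (A‖∇u‖_q + B‖u‖_q)^{1/(1+τ)}. -/
set_option maxHeartbeats 1000000

open MeasureTheory Real Filter
open scoped ENNReal

/-- Bernoulli-type inequality: `a^p - b^p ≤ p a^(p-1) (a-b)` for `0 ≤ b ≤ a`, `1 ≤ p`. -/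
lemma bern_aux {a b p : ℝ} (ha : 0 < a) (hb : 0 ≤ b) (hba : b ≤ a) (hp : 1 ≤ p) :
    a ^ p - b ^ p ≤ p * a ^ (p - 1) * (a - b) := by
  have ht0 : 0 ≤ b / a := div_nonneg hb ha.le
  have h := one_add_mul_self_le_rpow_one_add (s := b / a - 1) (by linarith) hp
  rw [add_sub_cancel] at h
  have hap : 0 < a ^ p := rpow_pos_of_pos ha p
  have hmul := mul_le_mul_of_nonneg_left h hap.le
  have hdiv : (b / a) ^ p = b ^ p / a ^ p := Real.div_rpow hb ha.le p
  have hap1 : a ^ p = a ^ (p - 1) * a := by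
    rw [← Real.rpow_add_one ha.ne' (p - 1)]; ring_nf
  have hane : a ≠ 0 := ha.ne'
  have h1 : a ^ p * ((b / a) ^ p) = b ^ p := by
    rw [hdiv]; field_simp
  have h2 : a ^ p * (b / a) = a ^ (p - 1) * b := by
    rw [hap1]; field_simp
  nlinarith [hmul, h1, h2]

/-- Real version of subadditivity of `x ↦ x^p` for `0 ≤ p ≤ 1`. -/
lemma rpow_add_le_add_rpow_real {x y p : ℝ} (hx : 0 ≤ x) (hy : 0 ≤ y) (hp : 0 ≤ p)
    (hp1 : p ≤ 1) : (x + y) ^ p ≤ x ^ p + y ^ p := by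
  have h := NNReal.rpow_add_le_add_rpow x.toNNReal y.toNNReal hp hp1
  have h2 := NNReal.coe_le_coe.2 h
  simpa [NNReal.coe_rpow, ← Real.toNNReal_add hx hy,
    Real.coe_toNNReal _ (by linarith : (0:ℝ) ≤ x + y),
    Real.coe_toNNReal _ hx, Real.coe_toNNReal _ hy] using h2

/-- The `L^p` norm (with respect to Lebesgue measure) of a function on `ℝⁿ`. -/
noncomputable def lpN (n : ℕ) (p : ℝ) (u : EuclideanSpace ℝ (Fin n) → ℝ) : ℝ :=
  (eLpNorm u (ENNReal.ofReal p) volume).toReal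

/-- The `L^p` norm of the pointwise norm of the `k`-th iterated derivative. -/
noncomputable def dLpN (n k : ℕ) (p : ℝ) (u : EuclideanSpace ℝ (Fin n) → ℝ) : ℝ :=
  (eLpNorm (fun x => ‖iteratedFDeriv ℝ k u x‖) (ENNReal.ofReal p) volume).toReal

/-- `(A, B)` is an admissible Sobolev pair for `ℝⁿ`: both are positive and the
Sobolev inequality `‖u‖_{2n/(n-2)} ≤ A ‖∇u‖₂ + B ‖u‖₂` holds for all smooth
compactly supported functions. -/
def SobolevPair (n : ℕ) (A B : ℝ) : Prop :=
  0 < A ∧ 0 < B ∧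
    ∀ u : EuclideanSpace ℝ (Fin n) → ℝ, ContDiff ℝ (⊤ : ℕ∞) u → HasCompactSupport u →
      lpN n (2 * (n : ℝ) / ((n : ℝ) - 2)) u ≤ A * dLpN n 1 2 u + B * lpN n 2 u

theorem stmt8 (n : ℕ) (hn : 3 ≤ n) (A B : ℝ) (hAB : SobolevPair n A B)
    (τ : ℝ) (hτ : 0 < τ) (q : ℝ) (hq : 2 < q)
    (u : EuclideanSpace ℝ (Fin n) → ℝ) (hu : ContDiff ℝ (⊤ : ℕ∞) u) (hsupp : HasCompactSupport u)
    (hnonneg : ∀ x, 0 ≤ u x) :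
    lpN n ((1 + τ) * (2 * (n : ℝ) / ((n : ℝ) - 2))) u ≤
      (1 + τ) ^ ((1 : ℝ) / (1 + τ)) * (lpN n (2 * q * τ / (q - 2)) u) ^ (τ / (1 + τ)) *
        (A * dLpN n 1 q u + B * lpN n q u) ^ ((1 : ℝ) / (1 + τ)) := by
  obtain ⟨hA, hB, hSob⟩ := hAB
  have hn3 : (3:ℝ) ≤ (n:ℝ) := by exact_mod_cast hn
  have hn2 : (0:ℝ) < (n:ℝ) - 2 := by linarith
  set p0 : ℝ := 2 * (n:ℝ) / ((n:ℝ) - 2) with hp0_def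
  have hp0_2 : 2 ≤ p0 := by
    rw [hp0_def, le_div_iff₀ hn2]; nlinarith
  have hp0_pos : (0:ℝ) < p0 := by linarith
  have hq0 : (0:ℝ) < q := by linarith
  have hq2 : (0:ℝ) < q - 2 := by linarith
  set r : ℝ := 2 * q / (q - 2) with hr_def
  have hr2 : (2:ℝ) ≤ r := by
    rw [hr_def, le_div_iff₀ hq2]; nlinarith
  have hr_pos : (0:ℝ) < r := by linarith
  have h1τ : (0:ℝ) < 1 + τ := by linarith
  set Q := ENNReal.ofReal q with hQ_def
  set R := ENNReal.ofReal r with hR_def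
  set P0 := ENNReal.ofReal p0 with hP0_def
  have hpqr : (1:ℝ≥0∞) / ENNReal.ofReal 2 = 1 / R + 1 / Q := by
    have hrq : (2:ℝ)⁻¹ = r⁻¹ + q⁻¹ := by
      rw [hr_def]; field_simp; ring
    rw [hR_def, hQ_def, one_div, one_div, one_div, ← ENNReal.ofReal_inv_of_pos two_pos,
      ← ENNReal.ofReal_inv_of_pos hr_pos, ← ENNReal.ofReal_inv_of_pos hq0,
      ← ENNReal.ofReal_add (by positivity) (by positivity), hrq]
  set K := tsupport u with hK_def
  have hKc : IsCompact K := hsupp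
  have hKm : MeasurableSet K := (isClosed_tsupport u).measurableSet
  have hμK : volume K ≠ ⊤ := hKc.measure_lt_top.ne
  obtain ⟨M, hM⟩ := hsupp.exists_bound_of_continuous hu.continuous
  have hM0 : (0:ℝ) ≤ M := le_trans (norm_nonneg _) (hM 0)
  have hMu : ∀ x, u x ≤ M := fun x => le_trans (le_abs_self _) (hM x)
  have hcu : Continuous u := hu.continuous
  have hfu : Continuous (fderiv ℝ u) := hu.continuous_fderiv (by simp)
  set Du := fun x => ‖fderiv ℝ u x‖ with hDu_def
  have hcDu : Continuous Du := hfu.norm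
  have hDusupp : HasCompactSupport Du := (hsupp.mono' (support_fderiv_subset ℝ)).norm
  have hcut : Continuous (fun x => u x ^ τ) := by
    rw [continuous_iff_continuousAt]; intro x
    exact (Real.continuousAt_rpow_const _ _ (Or.inr hτ.le)).comp hcu.continuousAt
  -- rewrite dLpN in terms of Du
  have hD1 : (fun x => ‖iteratedFDeriv ℝ 1 u x‖) = Du := by
    funext x
    show ‖iteratedFDeriv ℝ 1 u x‖ = ‖fderiv ℝ u x‖
    rw [← norm_iteratedFDeriv_zero (𝕜 := ℝ) (f := fderiv ℝ u) (x := x),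
      norm_iteratedFDeriv_fderiv]
  have hdLpNu : dLpN n 1 q u = (eLpNorm Du Q volume).toReal := by
    rw [dLpN, hD1, hQ_def]
  set Z : ℝ := A * dLpN n 1 q u + B * lpN n q u with hZ_def
  have hd0 : 0 ≤ dLpN n 1 q u := ENNReal.toReal_nonneg
  have hl0 : 0 ≤ lpN n q u := ENNReal.toReal_nonneg
  have hZ0 : 0 ≤ Z := by
    rw [hZ_def]
    have := mul_nonneg hA.le hd0
    have := mul_nonneg hB.le hl0
    linarith
  have memu : ∀ p : ℝ≥0∞, MemLp u p volume := fun p =>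
    hcu.memLp_of_hasCompactSupport hsupp
  have memDu : MemLp Du Q volume := hcDu.memLp_of_hasCompactSupport hDusupp
  have memuτ : MemLp (fun x => u x ^ τ) R volume :=
    hcut.memLp_of_hasCompactSupport (hsupp.comp_left (g := fun t => t ^ τ)
      (Real.zero_rpow hτ.ne'))
  have hR1 : (1:ℝ≥0∞) ≤ R := by
    rw [hR_def]; exact ENNReal.one_le_ofReal.2 (by linarith)
  have hR0 : R ≠ 0 := by
    rw [hR_def]; simp [ENNReal.ofReal_eq_zero, not_le]; linarith
  have hRtop : R ≠ ⊤ := ENNReal.ofReal_ne_top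
  have hP01 : (1:ℝ≥0∞) ≤ P0 := by
    rw [hP0_def]; exact ENNReal.one_le_ofReal.2 (by linarith)
  have hP00 : P0 ≠ 0 := by
    rw [hP0_def]; simp [ENNReal.ofReal_eq_zero, not_le]; linarith
  have hP0top : P0 ≠ ⊤ := ENNReal.ofReal_ne_top
  have hC1fin : (volume K) ^ ((1:ℝ)/p0) ≠ ⊤ :=
    ENNReal.rpow_ne_top_of_nonneg (by positivity) hμK
  have hC2fin : (volume K) ^ ((1:ℝ)/r) ≠ ⊤ :=
    ENNReal.rpow_ne_top_of_nonneg (by positivity) hμK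
  set C1 : ℝ := ((volume K) ^ ((1:ℝ)/p0)).toReal with hC1_def
  set C2 : ℝ := ((volume K) ^ ((1:ℝ)/r)).toReal with hC2_def
  set NF : ℝ := (eLpNorm (fun x => u x ^ (1+τ)) P0 volume).toReal with hNF_def
  set Yt : ℝ := (eLpNorm (fun x => u x ^ τ) R volume).toReal with hYt_def
  have hkey : ∀ ε : ℝ, 0 < ε → ε ≤ 1 →
      NF ≤ (1+τ) * (Yt + (ε ^ τ + τ * (M+1) ^ (τ-1) * ε) * C2) * Z + ε ^ (1+τ) * C1 := by
    intro ε hε hε1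
    -- the regularized function
    set a := fun x : EuclideanSpace ℝ (Fin n) => Real.sqrt (u x ^ 2 + ε ^ 2) with ha_def
    have ha_pos : ∀ x, 0 < a x := fun x => Real.sqrt_pos.2 (by positivity)
    have ha_le : ∀ x, a x ≤ u x + ε := by
      intro x
      have h1 : u x ^ 2 + ε ^ 2 ≤ (u x + ε) ^ 2 := by nlinarith [hnonneg x, hε.le]
      calc a x ≤ Real.sqrt ((u x + ε) ^ 2) := Real.sqrt_le_sqrt h1
        _ = u x + ε := Real.sqrt_sq (by have := hnonneg x; linarith)
    have hu_le_a : ∀ x, u x ≤ a x := by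
      intro x
      calc u x = Real.sqrt (u x ^ 2) := (Real.sqrt_sq (hnonneg x)).symm
        _ ≤ a x := Real.sqrt_le_sqrt (by nlinarith)
    have hε_le_a : ∀ x, ε ≤ a x := by
      intro x
      calc ε = Real.sqrt (ε ^ 2) := (Real.sqrt_sq hε.le).symm
        _ ≤ a x := Real.sqrt_le_sqrt (by nlinarith [sq_nonneg (u x)])
    set s : ℝ := (1 + τ) / 2 with hs_def
    have hs_pos : 0 < s := by rw [hs_def]; positivity
    set g := fun t : ℝ => (t ^ 2 + ε ^ 2) ^ s - (ε ^ 2) ^ s with hg_def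
    set v := fun x => g (u x) with hv_def
    have hg0 : g 0 = 0 := by simp [hg_def]
    have hva : ∀ x, v x = a x ^ (1 + τ) - ε ^ (1 + τ) := by
      intro x
      have hb : (0:ℝ) ≤ u x ^ 2 + ε ^ 2 := by positivity
      have h1 : a x ^ (1 + τ) = (u x ^ 2 + ε ^ 2) ^ s := by
        rw [ha_def]
        simp only
        rw [Real.sqrt_eq_rpow, ← Real.rpow_mul hb]
        congr 1
        rw [hs_def]; ring
      have h2 : ε ^ (1 + τ) = (ε ^ 2) ^ s := by
        rw [← Real.rpow_natCast ε 2, ← Real.rpow_mul hε.le, hs_def]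
        congr 1
        push_cast
        ring
      rw [hv_def, hg_def, h1, h2]
    have hgsm : ContDiff ℝ (⊤ : ℕ∞) g := by
      have h1 : ContDiff ℝ (⊤ : ℕ∞) (fun t : ℝ => t ^ 2 + ε ^ 2) :=
        ((contDiff_id (𝕜 := ℝ)).pow 2).add contDiff_const
      exact (h1.rpow_const_of_ne (fun t => by positivity)).sub contDiff_const
    have hvsm : ContDiff ℝ (⊤ : ℕ∞) v := hgsm.comp hu
    have hvsupp : HasCompactSupport v := hsupp.comp_left (g := g) hg0
    have hSv := hSob v hvsm hvsupp
    -- derivative of v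
    have hudiff : ∀ x, HasFDerivAt u (fderiv ℝ u x) x := fun x =>
      (hu.differentiable (by simp) x).hasFDerivAt
    have hfdv : ∀ x, fderiv ℝ v x = ((2 * u x) * s * (u x ^ 2 + ε ^ 2) ^ (s - 1)) • fderiv ℝ u x := by
      intro x
      have hb : u x ^ 2 + ε ^ 2 ≠ 0 := by positivity
      have h1 : HasDerivAt (fun t : ℝ => t ^ 2 + ε ^ 2) (2 * u x) (u x) := by
        simpa using (hasDerivAt_pow 2 (u x)).add_const (ε ^ 2)
      have h2 := (h1.rpow_const (p := s) (Or.inl hb)).sub_const ((ε ^ 2) ^ s)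
      have h3 : HasDerivAt g ((2 * u x) * s * (u x ^ 2 + ε ^ 2) ^ (s - 1)) (u x) := h2
      exact (h3.comp_hasFDerivAt x (hudiff x)).fderiv
    have hdv : ∀ x, ‖fderiv ℝ v x‖ ≤ (1 + τ) * (a x ^ τ * ‖fderiv ℝ u x‖) := by
      intro x
      rw [hfdv x, norm_smul, Real.norm_eq_abs]
      have hb : (0:ℝ) < u x ^ 2 + ε ^ 2 := by positivity
      have hc : (0:ℝ) < (u x ^ 2 + ε ^ 2) ^ (s - 1) := Real.rpow_pos_of_pos hb _
      have h1 : |2 * u x * s * (u x ^ 2 + ε ^ 2) ^ (s - 1)|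
          = 2 * s * (u x ^ 2 + ε ^ 2) ^ (s - 1) * |u x| := by
        rw [abs_mul, abs_mul, abs_mul, abs_of_nonneg hs_pos.le, abs_of_nonneg hc.le]
        rw [abs_of_nonneg (by norm_num : (0:ℝ) ≤ 2)]
        ring
      have h2 : |u x| ≤ (u x ^ 2 + ε ^ 2) ^ ((1:ℝ) / 2) := by
        rw [← Real.sqrt_eq_rpow]
        calc |u x| = Real.sqrt (u x ^ 2) := (Real.sqrt_sq_eq_abs _).symm
          _ ≤ _ := Real.sqrt_le_sqrt (by nlinarith)
      have h3 : (u x ^ 2 + ε ^ 2) ^ (s - 1) * (u x ^ 2 + ε ^ 2) ^ ((1:ℝ) / 2)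
          = (u x ^ 2 + ε ^ 2) ^ (τ / 2) := by
        rw [← Real.rpow_add hb]
        congr 1
        rw [hs_def]; ring
      have haτ : a x ^ τ = (u x ^ 2 + ε ^ 2) ^ (τ / 2) := by
        rw [ha_def]
        simp only
        rw [Real.sqrt_eq_rpow, ← Real.rpow_mul hb.le]
        congr 1
        ring
      have h4 : |2 * u x * s * (u x ^ 2 + ε ^ 2) ^ (s - 1)| ≤ (1 + τ) * a x ^ τ := by
        rw [h1, haτ, ← h3]
        have h5 := mul_le_mul_of_nonneg_left h2 (mul_nonneg (by positivity) hc.le)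
        calc 2 * s * (u x ^ 2 + ε ^ 2) ^ (s - 1) * |u x|
            = (2 * s) * ((u x ^ 2 + ε ^ 2) ^ (s - 1) * |u x|) := by ring
          _ ≤ (2 * s) * ((u x ^ 2 + ε ^ 2) ^ (s - 1) * (u x ^ 2 + ε ^ 2) ^ ((1:ℝ)/2)) := by
              have := mul_le_mul_of_nonneg_left h2 hc.le
              exact mul_le_mul_of_nonneg_left this (by positivity)
          _ = (1 + τ) * ((u x ^ 2 + ε ^ 2) ^ (s - 1) * (u x ^ 2 + ε ^ 2) ^ ((1:ℝ)/2)) := by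
              rw [hs_def]; ring
      calc |2 * u x * s * (u x ^ 2 + ε ^ 2) ^ (s - 1)| * ‖fderiv ℝ u x‖
          ≤ ((1 + τ) * a x ^ τ) * ‖fderiv ℝ u x‖ :=
            mul_le_mul_of_nonneg_right h4 (norm_nonneg _)
        _ = (1 + τ) * (a x ^ τ * ‖fderiv ℝ u x‖) := by ring
    -- bounds on v
    have hv0 : ∀ x, 0 ≤ v x := by
      intro x
      rw [hva x]
      have := Real.rpow_le_rpow hε.le (hε_le_a x) (by linarith : (0:ℝ) ≤ 1 + τ)
      linarith
    have haτ0 : ∀ x, (0:ℝ) ≤ a x ^ τ := fun x => (Real.rpow_pos_of_pos (ha_pos x) τ).le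
    have hvle : ∀ x, v x ≤ (1 + τ) * (a x ^ τ * u x) := by
      intro x
      rw [hva x]
      have hb := bern_aux (ha_pos x) hε.le (hε_le_a x) (by linarith : (1:ℝ) ≤ 1 + τ)
      have he : a x ^ (1 + τ - 1) = a x ^ τ := by norm_num
      rw [he] at hb
      have h2 : a x - ε ≤ u x := by linarith [ha_le x]
      have h3 := mul_le_mul_of_nonneg_left h2 (mul_nonneg h1τ.le (haτ0 x))
      calc a x ^ (1 + τ) - ε ^ (1 + τ) ≤ (1 + τ) * a x ^ τ * (a x - ε) := hb
        _ = (1 + τ) * a x ^ τ * (a x - ε) := rfl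
        _ ≤ (1 + τ) * a x ^ τ * u x := by nlinarith [h3]
        _ = (1 + τ) * (a x ^ τ * u x) := by ring
    -- the indicator function G
    set G := K.indicator (fun x => a x ^ τ) with hG_def
    have hca : Continuous a := Real.continuous_sqrt.comp ((hcu.pow 2).add continuous_const)
    have hcaτ : Continuous (fun x => a x ^ τ) := by
      rw [continuous_iff_continuousAt]; intro x
      exact (Real.continuousAt_rpow_const _ _ (Or.inl (ha_pos x).ne')).comp hca.continuousAt
    have hGm : AEStronglyMeasurable G volume :=
      (hcaτ.stronglyMeasurable.indicator hKm).aestronglyMeasurable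
    have hG0 : ∀ x, 0 ≤ G x := by
      intro x
      rw [hG_def]
      by_cases hx : x ∈ K
      · rw [Set.indicator_of_mem hx]; exact haτ0 x
      · rw [Set.indicator_of_notMem hx]
    -- L² bound for v via Hölder
    have hGu : ∀ x, ‖v x‖ ≤ ‖((1 + τ) • (G • u)) x‖ := by
      intro x
      have hrhs : ((1 + τ) • (G • u)) x = (1 + τ) * (G x * u x) := rfl
      rw [Real.norm_eq_abs, Real.norm_eq_abs, abs_of_nonneg (hv0 x), hrhs]
      by_cases hx : x ∈ K
      · rw [hG_def, Set.indicator_of_mem hx,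
          abs_of_nonneg (mul_nonneg h1τ.le (mul_nonneg (haτ0 x) (hnonneg x)))]
        exact hvle x
      · have hux : u x = 0 := image_eq_zero_of_notMem_tsupport hx
        have h1 := hvle x
        rw [hux, mul_zero, mul_zero] at h1
        rw [hG_def, Set.indicator_of_notMem hx, hux]
        simpa using h1
    have hL2 : eLpNorm v (ENNReal.ofReal 2) volume ≤
        ENNReal.ofReal (1 + τ) * (eLpNorm G R volume * eLpNorm u Q volume) := by
      calc eLpNorm v (ENNReal.ofReal 2) volume
          ≤ eLpNorm ((1 + τ) • (G • u)) (ENNReal.ofReal 2) volume := eLpNorm_mono hGu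
        _ = ‖(1 + τ : ℝ)‖₊ * eLpNorm (G • u) (ENNReal.ofReal 2) volume :=
            eLpNorm_const_smul _ _ _ _
        _ ≤ ‖(1 + τ : ℝ)‖₊ * (eLpNorm G R volume * eLpNorm u Q volume) :=
            mul_le_mul_right (eLpNorm_smul_le_mul_eLpNorm hcu.aestronglyMeasurable hGm (hpqr := ⟨by simpa only [one_div] using hpqr.symm⟩)) _
        _ = ENNReal.ofReal (1 + τ) * (eLpNorm G R volume * eLpNorm u Q volume) := by
            rw [← enorm_eq_nnnorm, Real.enorm_eq_ofReal h1τ.le]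
    -- L² bound for the gradient of v via Hölder
    have hDv1 : (fun x => ‖iteratedFDeriv ℝ 1 v x‖) = fun x => ‖fderiv ℝ v x‖ := by
      funext x
      show ‖iteratedFDeriv ℝ 1 v x‖ = ‖fderiv ℝ v x‖
      rw [← norm_iteratedFDeriv_zero (𝕜 := ℝ) (f := fderiv ℝ v) (x := x),
        norm_iteratedFDeriv_fderiv]
    have hGDu : ∀ x, ‖‖fderiv ℝ v x‖‖ ≤ ‖((1 + τ) • (G • Du)) x‖ := by
      intro x
      have hrhs : ((1 + τ) • (G • Du)) x = (1 + τ) * (G x * Du x) := rfl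
      rw [norm_norm, hrhs]
      by_cases hx : x ∈ K
      · rw [Real.norm_eq_abs, hG_def, Set.indicator_of_mem hx,
          abs_of_nonneg (mul_nonneg h1τ.le (mul_nonneg (haτ0 x) (norm_nonneg _)))]
        exact hdv x
      · have hdux : fderiv ℝ u x = 0 := by
          by_contra hne
          exact hx (support_fderiv_subset ℝ (f := u) (Function.mem_support.2 hne))
        have h1 := hdv x
        rw [hdux] at h1
        simp only [norm_zero, mul_zero] at h1
        have h2 : ‖fderiv ℝ v x‖ = 0 := le_antisymm h1 (norm_nonneg _)
        rw [hG_def, Set.indicator_of_notMem hx, h2]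
        exact norm_nonneg _
    have hDL2 : eLpNorm (fun x => ‖iteratedFDeriv ℝ 1 v x‖) (ENNReal.ofReal 2) volume ≤
        ENNReal.ofReal (1 + τ) * (eLpNorm G R volume * eLpNorm Du Q volume) := by
      rw [hDv1]
      calc eLpNorm (fun x => ‖fderiv ℝ v x‖) (ENNReal.ofReal 2) volume
          ≤ eLpNorm ((1 + τ) • (G • Du)) (ENNReal.ofReal 2) volume := eLpNorm_mono hGDu
        _ = ‖(1 + τ : ℝ)‖₊ * eLpNorm (G • Du) (ENNReal.ofReal 2) volume :=
            eLpNorm_const_smul _ _ _ _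
        _ ≤ ‖(1 + τ : ℝ)‖₊ * (eLpNorm G R volume * eLpNorm Du Q volume) :=
            mul_le_mul_right (eLpNorm_smul_le_mul_eLpNorm hcDu.aestronglyMeasurable hGm (hpqr := ⟨by simpa only [one_div] using hpqr.symm⟩)) _
        _ = _ := by rw [← enorm_eq_nnnorm, Real.enorm_eq_ofReal h1τ.le]
    -- bound the R-norm of G
    set δ : ℝ := ε ^ τ + τ * (M + 1) ^ (τ - 1) * ε with hδ_def
    have hδ0 : 0 ≤ δ := by
      rw [hδ_def]
      have h1 : (0:ℝ) ≤ ε ^ τ := Real.rpow_nonneg hε.le τ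
      have h2 : (0:ℝ) ≤ (M + 1) ^ (τ - 1) := Real.rpow_nonneg (by linarith) _
      have h3 := mul_nonneg (mul_nonneg hτ.le h2) hε.le
      linarith
    have haK : ∀ x, x ∈ K → a x ^ τ ≤ u x ^ τ + δ := by
      intro x _
      have h1 : a x ^ τ ≤ (u x + ε) ^ τ :=
        Real.rpow_le_rpow (Real.sqrt_nonneg _) (ha_le x) hτ.le
      rcases le_or_gt τ 1 with hτ1 | hτ1
      · have h2 := rpow_add_le_add_rpow_real (hnonneg x) hε.le hτ.le hτ1
        have h3 : (0:ℝ) ≤ τ * (M + 1) ^ (τ - 1) * ε := by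
          have h4 := Real.rpow_nonneg (by linarith : (0:ℝ) ≤ M + 1) (τ - 1)
          exact mul_nonneg (mul_nonneg hτ.le h4) hε.le
        rw [hδ_def]; linarith
      · have hb := bern_aux (a := u x + ε) (b := u x)
          (by have := hnonneg x; linarith) (hnonneg x) (by linarith) hτ1.le
        have h3 : (u x + ε) ^ (τ - 1) ≤ (M + 1) ^ (τ - 1) :=
          Real.rpow_le_rpow (by have := hnonneg x; linarith)
            (by have := hMu x; linarith) (by linarith)
        have h4 : (0:ℝ) ≤ ε ^ τ := Real.rpow_nonneg hε.le τ
        have h5 : τ * (u x + ε) ^ (τ - 1) * ε ≤ τ * (M + 1) ^ (τ - 1) * ε :=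
          mul_le_mul_of_nonneg_right (mul_le_mul_of_nonneg_left h3 hτ.le) hε.le
        have h6 : u x + ε - u x = ε := by ring
        rw [h6] at hb
        rw [hδ_def]; linarith
    have hGle : ∀ x, ‖G x‖ ≤ ‖((fun x => u x ^ τ) + K.indicator (fun _ => δ)) x‖ := by
      intro x
      rw [Pi.add_apply, Real.norm_eq_abs, Real.norm_eq_abs]
      have huτ0 : (0:ℝ) ≤ u x ^ τ := Real.rpow_nonneg (hnonneg x) τ
      by_cases hx : x ∈ K
      · rw [hG_def, Set.indicator_of_mem hx, Set.indicator_of_mem hx,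
          abs_of_nonneg (haτ0 x), abs_of_nonneg (by linarith)]
        exact haK x hx
      · rw [hG_def, Set.indicator_of_notMem hx, Set.indicator_of_notMem hx]
        simp [abs_nonneg]
    have hGbound : eLpNorm G R volume ≤
        eLpNorm (fun x => u x ^ τ) R volume + ENNReal.ofReal δ * (volume K) ^ ((1:ℝ)/r) := by
      calc eLpNorm G R volume
          ≤ eLpNorm ((fun x => u x ^ τ) + K.indicator (fun _ => δ)) R volume :=
            eLpNorm_mono hGle
        _ ≤ eLpNorm (fun x => u x ^ τ) R volume
            + eLpNorm (K.indicator (fun _ => δ)) R volume :=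
            eLpNorm_add_le hcut.aestronglyMeasurable
              ((stronglyMeasurable_const.indicator hKm).aestronglyMeasurable) hR1
        _ = _ := by
            rw [eLpNorm_indicator_const hKm hR0 hRtop]
            congr 2
            · exact Real.enorm_eq_ofReal hδ0
            · rw [hR_def, ENNReal.toReal_ofReal hr_pos.le]
    -- triangle bound for F = u^(1+τ)
    have hFle : ∀ x, ‖u x ^ (1 + τ)‖ ≤ ‖(v + K.indicator (fun _ => ε ^ (1 + τ))) x‖ := by
      intro x
      rw [Pi.add_apply, Real.norm_eq_abs, Real.norm_eq_abs,
        abs_of_nonneg (Real.rpow_nonneg (hnonneg x) _)]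
      by_cases hx : x ∈ K
      · rw [Set.indicator_of_mem hx]
        have h1 : u x ^ (1 + τ) ≤ a x ^ (1 + τ) :=
          Real.rpow_le_rpow (hnonneg x) (hu_le_a x) h1τ.le
        have h2 : a x ^ (1 + τ) = v x + ε ^ (1 + τ) := by rw [hva x]; ring
        rw [abs_of_nonneg (by
          have := hv0 x
          have := Real.rpow_nonneg hε.le (1 + τ)
          linarith)]
        linarith
      · have hux : u x = 0 := image_eq_zero_of_notMem_tsupport hx
        rw [Set.indicator_of_notMem hx, hux, Real.zero_rpow h1τ.ne', add_zero,
          abs_of_nonneg (hv0 x)]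
        exact hv0 x
    have hvcont : Continuous v := hvsm.continuous
    have hFbound : eLpNorm (fun x => u x ^ (1 + τ)) P0 volume ≤
        eLpNorm v P0 volume + ENNReal.ofReal (ε ^ (1 + τ)) * (volume K) ^ ((1:ℝ)/p0) := by
      calc eLpNorm (fun x => u x ^ (1 + τ)) P0 volume
          ≤ eLpNorm (v + K.indicator (fun _ => ε ^ (1 + τ))) P0 volume := eLpNorm_mono hFle
        _ ≤ eLpNorm v P0 volume + eLpNorm (K.indicator (fun _ => ε ^ (1 + τ))) P0 volume :=
            eLpNorm_add_le hvcont.aestronglyMeasurable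
              ((stronglyMeasurable_const.indicator hKm).aestronglyMeasurable) hP01
        _ = _ := by
            rw [eLpNorm_indicator_const hKm hP00 hP0top]
            congr 2
            · exact Real.enorm_eq_ofReal (Real.rpow_nonneg hε.le _)
            · rw [hP0_def, ENNReal.toReal_ofReal hp0_pos.le]
    -- finiteness facts
    have hvfin : eLpNorm v P0 volume ≠ ⊤ :=
      (hvcont.memLp_of_hasCompactSupport hvsupp).eLpNorm_lt_top.ne
    have huQfin : eLpNorm u Q volume ≠ ⊤ := (memu Q).eLpNorm_lt_top.ne
    have hDuQfin : eLpNorm Du Q volume ≠ ⊤ := memDu.eLpNorm_lt_top.ne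
    have huτfin : eLpNorm (fun x => u x ^ τ) R volume ≠ ⊤ := memuτ.eLpNorm_lt_top.ne
    have hGfin : eLpNorm G R volume ≠ ⊤ := by
      refine ne_top_of_le_ne_top ?_ hGbound
      exact ENNReal.add_ne_top.2 ⟨huτfin, ENNReal.mul_ne_top ENNReal.ofReal_ne_top hC2fin⟩
    -- real-number versions
    have hGR : (eLpNorm G R volume).toReal ≤ Yt + δ * C2 := by
      have h1 := ENNReal.toReal_mono
        (ENNReal.add_ne_top.2 ⟨huτfin, ENNReal.mul_ne_top ENNReal.ofReal_ne_top hC2fin⟩) hGbound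
      rwa [ENNReal.toReal_add huτfin (ENNReal.mul_ne_top ENNReal.ofReal_ne_top hC2fin),
        ENNReal.toReal_mul, ENNReal.toReal_ofReal hδ0] at h1
    have hGR0 : 0 ≤ (eLpNorm G R volume).toReal := ENNReal.toReal_nonneg
    have hstepF : NF ≤ (eLpNorm v P0 volume).toReal + ε ^ (1 + τ) * C1 := by
      have hfin2 : ENNReal.ofReal (ε ^ (1 + τ)) * (volume K) ^ ((1:ℝ)/p0) ≠ ⊤ :=
        ENNReal.mul_ne_top ENNReal.ofReal_ne_top hC1fin
      have h1 := ENNReal.toReal_mono (ENNReal.add_ne_top.2 ⟨hvfin, hfin2⟩) hFbound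
      rwa [ENNReal.toReal_add hvfin hfin2, ENNReal.toReal_mul,
        ENNReal.toReal_ofReal (Real.rpow_nonneg hε.le _)] at h1
    have hstepD : dLpN n 1 2 v ≤
        (1 + τ) * ((eLpNorm G R volume).toReal * (eLpNorm Du Q volume).toReal) := by
      have hfin : ENNReal.ofReal (1 + τ) * (eLpNorm G R volume * eLpNorm Du Q volume) ≠ ⊤ :=
        ENNReal.mul_ne_top ENNReal.ofReal_ne_top (ENNReal.mul_ne_top hGfin hDuQfin)
      have h1 := ENNReal.toReal_mono hfin hDL2
      rw [ENNReal.toReal_mul, ENNReal.toReal_mul, ENNReal.toReal_ofReal h1τ.le] at h1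
      exact h1
    have hstep2 : lpN n 2 v ≤
        (1 + τ) * ((eLpNorm G R volume).toReal * (eLpNorm u Q volume).toReal) := by
      have hfin : ENNReal.ofReal (1 + τ) * (eLpNorm G R volume * eLpNorm u Q volume) ≠ ⊤ :=
        ENNReal.mul_ne_top ENNReal.ofReal_ne_top (ENNReal.mul_ne_top hGfin huQfin)
      have h1 := ENNReal.toReal_mono hfin hL2
      rw [ENNReal.toReal_mul, ENNReal.toReal_mul, ENNReal.toReal_ofReal h1τ.le] at h1
      exact h1
    -- combine with Sobolev
    have hlpNv : lpN n p0 v = (eLpNorm v P0 volume).toReal := rfl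
    have hDuQ : (eLpNorm Du Q volume).toReal = dLpN n 1 q u := hdLpNu.symm
    have huQ : (eLpNorm u Q volume).toReal = lpN n q u := rfl
    have hSv2 : (eLpNorm v P0 volume).toReal ≤
        (1 + τ) * (eLpNorm G R volume).toReal * Z := by
      rw [← hlpNv]
      calc lpN n p0 v ≤ A * dLpN n 1 2 v + B * lpN n 2 v := hSv
        _ ≤ A * ((1 + τ) * ((eLpNorm G R volume).toReal * (eLpNorm Du Q volume).toReal))
            + B * ((1 + τ) * ((eLpNorm G R volume).toReal * (eLpNorm u Q volume).toReal)) := by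
            have := mul_le_mul_of_nonneg_left hstepD hA.le
            have := mul_le_mul_of_nonneg_left hstep2 hB.le
            linarith
        _ = (1 + τ) * (eLpNorm G R volume).toReal * (A * (eLpNorm Du Q volume).toReal
            + B * (eLpNorm u Q volume).toReal) := by ring
        _ = (1 + τ) * (eLpNorm G R volume).toReal * Z := by
            rw [hDuQ, huQ, hZ_def]
    -- put it all together
    have hfinal : (1 + τ) * (eLpNorm G R volume).toReal * Z ≤
        (1 + τ) * (Yt + δ * C2) * Z := by
      have h1 := mul_le_mul_of_nonneg_right
        (mul_le_mul_of_nonneg_left hGR h1τ.le) hZ0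
      exact h1
    calc NF ≤ (eLpNorm v P0 volume).toReal + ε ^ (1 + τ) * C1 := hstepF
      _ ≤ (1 + τ) * (eLpNorm G R volume).toReal * Z + ε ^ (1 + τ) * C1 := by linarith [hSv2]
      _ ≤ (1 + τ) * (Yt + δ * C2) * Z + ε ^ (1 + τ) * C1 := by linarith [hfinal]
      _ = (1 + τ) * (Yt + (ε ^ τ + τ * (M + 1) ^ (τ - 1) * ε) * C2) * Z + ε ^ (1 + τ) * C1 := by
          rw [hδ_def]
  -- limit as ε → 0⁺
  have hlim : Tendsto (fun ε : ℝ =>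
      (1+τ) * (Yt + (ε ^ τ + τ * (M+1) ^ (τ-1) * ε) * C2) * Z + ε ^ (1+τ) * C1)
      (nhdsWithin 0 (Set.Ioi 0)) (nhds ((1+τ) * Yt * Z)) := by
    have h1 : Tendsto (fun ε : ℝ => ε ^ τ) (nhdsWithin 0 (Set.Ioi 0)) (nhds 0) := by
      have hc : ContinuousAt (fun x : ℝ => x ^ τ) 0 :=
        Real.continuousAt_rpow_const _ _ (Or.inr hτ.le)
      have := hc.tendsto.mono_left (nhdsWithin_le_nhds (s := Set.Ioi (0:ℝ)))
      rwa [Real.zero_rpow hτ.ne'] at this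
    have h2 : Tendsto (fun ε : ℝ => ε ^ (1+τ)) (nhdsWithin 0 (Set.Ioi 0)) (nhds 0) := by
      have hc : ContinuousAt (fun x : ℝ => x ^ (1+τ)) 0 :=
        Real.continuousAt_rpow_const _ _ (Or.inr h1τ.le)
      have := hc.tendsto.mono_left (nhdsWithin_le_nhds (s := Set.Ioi (0:ℝ)))
      rwa [Real.zero_rpow h1τ.ne'] at this
    have hid : Tendsto (fun ε : ℝ => ε) (nhdsWithin 0 (Set.Ioi 0)) (nhds 0) :=
      tendsto_id.mono_left (nhdsWithin_le_nhds (s := Set.Ioi (0:ℝ)))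
    have hδt : Tendsto (fun ε : ℝ => ε ^ τ + τ * (M+1) ^ (τ-1) * ε)
        (nhdsWithin 0 (Set.Ioi 0)) (nhds 0) := by
      have := h1.add (hid.const_mul (τ * (M+1) ^ (τ-1)))
      simpa [mul_comm] using this
    have hmain := (((hδt.mul_const C2).const_add Yt).const_mul (1+τ)).mul_const Z
    have hfin := hmain.add (h2.mul_const C1)
    simpa using hfin
  have hNFle : NF ≤ (1+τ) * Yt * Z := by
    refine ge_of_tendsto hlim ?_
    filter_upwards [Ioc_mem_nhdsGT_of_mem (Set.left_mem_Ico.2 zero_lt_one)] with ε hε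
    exact hkey ε hε.1 hε.2
  -- Identify NF and Yt with lpN quantities
  have habs : ∀ (c : ℝ), (fun x => u x ^ c) = fun x => ‖u x‖ ^ c := by
    intro c; funext x; rw [Real.norm_eq_abs, abs_of_nonneg (hnonneg x)]
  have hNFL : NF = (lpN n ((1+τ) * p0) u) ^ (1+τ) := by
    rw [hNF_def, habs (1+τ), eLpNorm_norm_rpow u h1τ, ← ENNReal.toReal_rpow, lpN]
    congr 2
    rw [hP0_def, ← ENNReal.ofReal_mul hp0_pos.le, mul_comm]
  have hYtL : Yt = (lpN n (2 * q * τ / (q - 2)) u) ^ τ := by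
    rw [hYt_def, habs τ, eLpNorm_norm_rpow u hτ, ← ENNReal.toReal_rpow, lpN]
    congr 2
    rw [hR_def, ← ENNReal.ofReal_mul hr_pos.le]
    congr 1
    rw [hr_def]; ring
  set Y : ℝ := lpN n (2 * q * τ / (q - 2)) u with hY_def
  set L : ℝ := lpN n ((1+τ) * p0) u with hL_def
  have hL0 : 0 ≤ L := ENNReal.toReal_nonneg
  have hY0 : 0 ≤ Y := ENNReal.toReal_nonneg
  have key : L ^ (1+τ) ≤ (1+τ) * Y ^ τ * Z := by
    rw [← hNFL]; rw [hYtL] at hNFle; exact hNFle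
  have hstep : L = (L ^ (1+τ)) ^ ((1:ℝ)/(1+τ)) := by
    rw [← Real.rpow_mul hL0, mul_one_div_cancel h1τ.ne', Real.rpow_one]
  calc L = (L ^ (1+τ)) ^ ((1:ℝ)/(1+τ)) := hstep
    _ ≤ ((1+τ) * Y ^ τ * Z) ^ ((1:ℝ)/(1+τ)) :=
        Real.rpow_le_rpow (Real.rpow_nonneg hL0 _) key (by positivity)
    _ = (1+τ) ^ ((1:ℝ)/(1+τ)) * (Y ^ τ) ^ ((1:ℝ)/(1+τ)) * Z ^ ((1:ℝ)/(1+τ)) := by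
        rw [Real.mul_rpow (by positivity) hZ0,
          Real.mul_rpow h1τ.le (Real.rpow_nonneg hY0 _)]
    _ = (1+τ) ^ ((1:ℝ)/(1+τ)) * Y ^ (τ/(1+τ)) * Z ^ ((1:ℝ)/(1+τ)) := by
        rw [← Real.rpow_mul hY0]
        congr 2
        field_simp
end

section
/- Let u be a symmetric traceless real 4×4 matrix and let W be a real 4-index array on Fin 4 satisfying W_{ijkl} = −W_{jikl}, W_{ijkl} = −W_{ijlk}, W_{ijkl} = W_{klij}, and Σ_α W_{α i α j} = 0 for all i, j. Then |⟨W + (1/2)·(u∧I), u∧u⟩| ≤ (2/√3) · ‖u‖² · (‖W‖² + (1/4)‖u‖²)^{1/2}, where I is the identity matrix, ∧ is the Kulkarni–Nomizu product, ⟨·,·⟩ and ‖W‖ are the (1/4)-normalized inner product and norm on 4-index arrays, and ‖u‖ is the Frobenius norm of u. -/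
open Matrix

/-- The square of a 4×4 matrix, written entrywise. -/
def Msq (u : Matrix (Fin 4) (Fin 4) ℝ) : Matrix (Fin 4) (Fin 4) ℝ :=
  fun i k => ∑ j, u i j * u j k

lemma sum4_flat {n : ℕ} (f : Fin n → Fin n → Fin n → Fin n → ℝ) :
    ∑ i, ∑ j, ∑ k, ∑ l, f i j k l
      = ∑ p : Fin n × Fin n × Fin n × Fin n, f p.1 p.2.1 p.2.2.1 p.2.2.2 := by
  simp [Fintype.sum_prod_type]

lemma inner4_nonneg {n : ℕ} (S : Fin n → Fin n → Fin n → Fin n → ℝ) : 0 ≤ inner4 S S := by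
  unfold inner4
  have h : (0:ℝ) ≤ ∑ i, ∑ j, ∑ k, ∑ l, S i j k l * S i j k l := by
    rw [sum4_flat]
    exact Finset.sum_nonneg fun p _ => mul_self_nonneg _
  linarith

lemma inner4_cs {n : ℕ} (S T : Fin n → Fin n → Fin n → Fin n → ℝ) :
    (inner4 S T)^2 ≤ inner4 S S * inner4 T T := by
  unfold inner4
  rw [sum4_flat, sum4_flat, sum4_flat]
  have h := Finset.sum_mul_sq_le_sq_mul_sq Finset.univ
    (fun p : Fin n × Fin n × Fin n × Fin n => S p.1 p.2.1 p.2.2.1 p.2.2.2)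
    (fun p : Fin n × Fin n × Fin n × Fin n => T p.1 p.2.1 p.2.2.1 p.2.2.2)
  simp only [pow_two] at h ⊢
  nlinarith [h]

lemma inner4_comm {n : ℕ} (S T : Fin n → Fin n → Fin n → Fin n → ℝ) :
    inner4 S T = inner4 T S := by
  unfold inner4
  congr 1
  exact Finset.sum_congr rfl fun i _ => Finset.sum_congr rfl fun j _ =>
    Finset.sum_congr rfl fun k _ => Finset.sum_congr rfl fun l _ => mul_comm _ _

lemma inner4_comb2 {n : ℕ} (S X Y Z : Fin n → Fin n → Fin n → Fin n → ℝ) (c : ℝ) :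
    inner4 S (fun i j k l => X i j k l + Y i j k l - c * Z i j k l)
      = inner4 S X + inner4 S Y - c * inner4 S Z := by
  unfold inner4
  rw [sum4_flat, sum4_flat, sum4_flat, sum4_flat]
  rw [Finset.sum_congr rfl (fun p _ =>
    (by ring : S p.1 p.2.1 p.2.2.1 p.2.2.2 *
        (X p.1 p.2.1 p.2.2.1 p.2.2.2 + Y p.1 p.2.1 p.2.2.1 p.2.2.2
          - c * Z p.1 p.2.1 p.2.2.1 p.2.2.2)
      = S p.1 p.2.1 p.2.2.1 p.2.2.2 * X p.1 p.2.1 p.2.2.1 p.2.2.2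
        + S p.1 p.2.1 p.2.2.1 p.2.2.2 * Y p.1 p.2.1 p.2.2.1 p.2.2.2
        - c * (S p.1 p.2.1 p.2.2.1 p.2.2.2 * Z p.1 p.2.1 p.2.2.1 p.2.2.2))),
    Finset.sum_sub_distrib, Finset.sum_add_distrib, ← Finset.mul_sum]
  ring

lemma inner4_addsmul_left {n : ℕ} (S T Z : Fin n → Fin n → Fin n → Fin n → ℝ) (c : ℝ) :
    inner4 (fun i j k l => S i j k l + c * T i j k l) Z
      = inner4 S Z + c * inner4 T Z := by
  unfold inner4
  rw [sum4_flat, sum4_flat, sum4_flat]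
  rw [Finset.sum_congr rfl (fun p _ =>
    (by ring : (S p.1 p.2.1 p.2.2.1 p.2.2.2 + c * T p.1 p.2.1 p.2.2.1 p.2.2.2)
        * Z p.1 p.2.1 p.2.2.1 p.2.2.2
      = S p.1 p.2.1 p.2.2.1 p.2.2.2 * Z p.1 p.2.1 p.2.2.1 p.2.2.2
        + c * (T p.1 p.2.1 p.2.2.1 p.2.2.2 * Z p.1 p.2.1 p.2.2.1 p.2.2.2))),
    Finset.sum_add_distrib, ← Finset.mul_sum]
  ring

lemma frob_comb3 (A B C : Matrix (Fin 4) (Fin 4) ℝ) (a b c : ℝ) :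
    frob (fun i j => a * A i j + b * B i j + c * C i j)
         (fun i j => a * A i j + b * B i j + c * C i j)
      = a^2 * frob A A + b^2 * frob B B + c^2 * frob C C
        + 2*a*b*frob A B + 2*a*c*frob A C + 2*b*c*frob B C := by
  simp only [frob, Fin.sum_univ_four]
  ring

lemma wkn_perp (W : Fin 4 → Fin 4 → Fin 4 → Fin 4 → ℝ) (v : Matrix (Fin 4) (Fin 4) ℝ)
    (c1 : ∀ a b, W a 0 b 0 + W a 1 b 1 + W a 2 b 2 + W a 3 b 3 = 0)
    (c2 : ∀ a b, W 0 a 0 b + W 1 a 1 b + W 2 a 2 b + W 3 a 3 b = 0)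
    (c3 : ∀ a b, W a 0 0 b + W a 1 1 b + W a 2 2 b + W a 3 3 b = 0)
    (c4 : ∀ a b, W 0 a b 0 + W 1 a b 1 + W 2 a b 2 + W 3 a b 3 = 0) :
    inner4 W (kulkarniNomizu v 1) = 0 := by
  simp only [inner4, kulkarniNomizu, Fin.sum_univ_four]
  simp [Matrix.one_apply]
  linear_combination v 0 0 * (c1 0 0 + c2 0 0 - c3 0 0 - c4 0 0) + v 0 1 * (c1 0 1 + c2 0 1 - c3 0 1 - c4 0 1) + v 0 2 * (c1 0 2 + c2 0 2 - c3 0 2 - c4 0 2) + v 0 3 * (c1 0 3 + c2 0 3 - c3 0 3 - c4 0 3) + v 1 0 * (c1 1 0 + c2 1 0 - c3 1 0 - c4 1 0) + v 1 1 * (c1 1 1 + c2 1 1 - c3 1 1 - c4 1 1) + v 1 2 * (c1 1 2 + c2 1 2 - c3 1 2 - c4 1 2) + v 1 3 * (c1 1 3 + c2 1 3 - c3 1 3 - c4 1 3) + v 2 0 * (c1 2 0 + c2 2 0 - c3 2 0 - c4 2 0) + v 2 1 * (c1 2 1 + c2 2 1 - c3 2 1 - c4 2 1) + v 2 2 * (c1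 2 2 + c2 2 2 - c3 2 2 - c4 2 2) + v 2 3 * (c1 2 3 + c2 2 3 - c3 2 3 - c4 2 3) + v 3 0 * (c1 3 0 + c2 3 0 - c3 3 0 - c4 3 0) + v 3 1 * (c1 3 1 + c2 3 1 - c3 3 1 - c4 3 1) + v 3 2 * (c1 3 2 + c2 3 2 - c3 3 2 - c4 3 2) + v 3 3 * (c1 3 3 + c2 3 3 - c3 3 3 - c4 3 3)


lemma key_step (P Q Rr E : ℝ) (hppos : 0 < P) (hDnn : 0 ≤ E)
    (hDval : E = P^2*Rr - P*Q^2 - P^4/4) : 4*Q^2 ≤ P*(4*Rr - P^2) := by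
  nlinarith [hDnn, hDval, hppos]

lemma main_step (X Q a b P : ℝ) (hppos : 0 < P) (hXnn : 0 ≤ X) (hQnn : 0 ≤ Q)
    (hann : 0 ≤ a) (hbnn : 0 ≤ b) (hXab : X ≤ a * b) :
    (X + Q)^2 * P ≤ (a^2 + P/4) * (P * b^2 + 4*Q^2) := by
  nlinarith [sq_nonneg (2 * Q * a - P/2 * b),
    mul_nonneg (mul_nonneg hppos.le hQnn) (sub_nonneg.mpr hXab),
    mul_nonneg (mul_nonneg hppos.le (add_nonneg (mul_nonneg hann hbnn) hXnn))
      (sub_nonneg.mpr hXab)]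

lemma sum_step (P Q Rr : ℝ) (hkey : 4*Q^2 ≤ P*(4*Rr - P^2)) :
    P * (7/3 * P^2 - 4 * Rr) + 4*Q^2 ≤ 4/3 * P^3 := by nlinarith [hkey]

lemma div_step (L P w : ℝ) (hppos : 0 < P)
    (h1 : L * P ≤ (w + P/4) * (4/3 * P^3)) : L ≤ 4/3 * P^2 * (w + 1/4 * P) := by
  have h2 : (w + P/4) * (4/3 * P^3) = (4/3 * P^2 * (w + 1/4 * P)) * P := by ring
  exact le_of_mul_le_mul_right (by linarith) hppos

set_option maxHeartbeats 4000000 in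
theorem stmt13 (u : Matrix (Fin 4) (Fin 4) ℝ) (hu : u.IsSymm)
    (htr : Matrix.trace u = 0)
    (W : Fin 4 → Fin 4 → Fin 4 → Fin 4 → ℝ)
    (hW1 : ∀ i j k l, W i j k l = - W j i k l)
    (hW2 : ∀ i j k l, W i j k l = - W i j l k)
    (hW3 : ∀ i j k l, W i j k l = W k l i j)
    (hW4 : ∀ i j, ∑ α, W α i α j = 0) :
    |inner4 (fun i j k l => W i j k l +
        (1 / 2) * kulkarniNomizu u (1 : Matrix (Fin 4) (Fin 4) ℝ) i j k l)
        (kulkarniNomizu u u)| ≤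
      (2 / Real.sqrt 3) * frob u u * Real.sqrt (inner4 W W + (1 / 4) * frob u u) := by
  -- entrywise symmetry and trace facts
  have hsym : ∀ i j, u j i = u i j := fun i j => by
    have h := congrFun (congrFun hu i) j
    rwa [Matrix.transpose_apply] at h
  have s10 := hsym 0 1
  have s20 := hsym 0 2
  have s21 := hsym 1 2
  have s30 := hsym 0 3
  have s31 := hsym 1 3
  have s32 := hsym 2 3
  have h33 : u 3 3 = -(u 0 0 + u 1 1 + u 2 2) := by
    have h := htr
    simp [Matrix.trace, Matrix.diag, Fin.sum_univ_four] at h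
    linarith
  -- contraction identities for W
  have c2 : ∀ a b, W 0 a 0 b + W 1 a 1 b + W 2 a 2 b + W 3 a 3 b = 0 := fun a b => by
    have h := hW4 a b
    simpa [Fin.sum_univ_four] using h
  have c1 : ∀ a b, W a 0 b 0 + W a 1 b 1 + W a 2 b 2 + W a 3 b 3 = 0 := fun a b => by
    have e : ∀ x, W a x b x = W x a x b := fun x => by rw [hW1 a x b x, hW2 x a b x]; ring
    rw [e 0, e 1, e 2, e 3]; exact c2 a b
  have c3 : ∀ a b, W a 0 0 b + W a 1 1 b + W a 2 2 b + W a 3 3 b = 0 := fun a b => by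
    have h := c1 a b
    rw [hW2 a 0 0 b, hW2 a 1 1 b, hW2 a 2 2 b, hW2 a 3 3 b]
    linarith
  have c4 : ∀ a b, W 0 a b 0 + W 1 a b 1 + W 2 a b 2 + W 3 a b 3 = 0 := fun a b => by
    have h := c1 a b
    rw [hW1 0 a b 0, hW1 1 a b 1, hW1 2 a b 2, hW1 3 a b 3]
    linarith
  have hperp : ∀ v : Matrix (Fin 4) (Fin 4) ℝ, inner4 W (kulkarniNomizu v 1) = 0 :=
    fun v => wkn_perp W v c1 c2 c3 c4
  -- the heavy polynomial identities
  have ha : inner4 (kulkarniNomizu u 1) (kulkarniNomizu u u) = -2 * frob u (Msq u) := by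
    simp [inner4, kulkarniNomizu, frob, Msq, Matrix.one_apply, Fin.sum_univ_four]
    simp only [s10, s20, s21, s30, s31, s32, h33]
    ring
  have b1 : inner4 (kulkarniNomizu u u) (kulkarniNomizu u u)
      = 2 * ((frob u u)^2 - frob (Msq u) (Msq u)) := by
    simp [inner4, kulkarniNomizu, frob, Msq, Fin.sum_univ_four]
    simp only [s10, s20, s21, s30, s31, s32, h33]
    ring
  have b2 : inner4 (kulkarniNomizu (Msq u) 1) (kulkarniNomizu u u)
      = -2 * frob (Msq u) (Msq u) := by
    simp [inner4, kulkarniNomizu, frob, Msq, Matrix.one_apply, Fin.sum_univ_four]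
    simp only [s10, s20, s21, s30, s31, s32, h33]
    ring
  have b3 : inner4 (kulkarniNomizu 1 1) (kulkarniNomizu u u) = -2 * frob u u := by
    simp [inner4, kulkarniNomizu, frob, Matrix.one_apply, Fin.sum_univ_four]
    simp only [s10, s20, s21, s30, s31, s32, h33]
    ring
  have b4 : inner4 (kulkarniNomizu (Msq u) 1) (kulkarniNomizu (Msq u) 1)
      = 2 * frob (Msq u) (Msq u) + (frob u u)^2 := by
    simp [inner4, kulkarniNomizu, frob, Msq, Matrix.one_apply, Fin.sum_univ_four]
    simp only [s10, s20, s21, s30, s31, s32, h33]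
    ring
  have b5 : inner4 (kulkarniNomizu 1 1) (kulkarniNomizu (Msq u) 1) = 6 * frob u u := by
    simp [inner4, kulkarniNomizu, frob, Msq, Matrix.one_apply, Fin.sum_univ_four]
    simp only [s10, s20, s21, s30, s31, s32, h33]
    ring
  have b6 : inner4 (kulkarniNomizu (1 : Matrix (Fin 4) (Fin 4) ℝ) 1) (kulkarniNomizu 1 1)
      = 24 := by
    simp [inner4, kulkarniNomizu, Matrix.one_apply, Fin.sum_univ_four]
    norm_num
  have m1 : frob (Msq u) u = frob u (Msq u) := by
    simp [frob, Msq, Fin.sum_univ_four]; ring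
  have m2 : frob (Msq u) 1 = frob u u := by
    simp [frob, Msq, Matrix.one_apply, Fin.sum_univ_four]
    simp only [s10, s20, s21, s30, s31, s32, h33]
  have m3 : frob u 1 = 0 := by
    simp [frob, Matrix.one_apply, Fin.sum_univ_four]
    linarith
  have m4 : frob (1 : Matrix (Fin 4) (Fin 4) ℝ) 1 = 4 := by
    simp [frob, Matrix.one_apply, Fin.sum_univ_four]
  -- abbreviations
  set P := frob u u with hP
  set Q := frob u (Msq u) with hQ
  set Rr := frob (Msq u) (Msq u) with hRr
  -- the tensor C (Weyl part of u ∧ u)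
  set C : Fin 4 → Fin 4 → Fin 4 → Fin 4 → ℝ :=
    (fun i j k l => kulkarniNomizu u u i j k l + kulkarniNomizu (Msq u) 1 i j k l
      - (P / 6) * kulkarniNomizu 1 1 i j k l) with hC
  have hSC : ∀ S : Fin 4 → Fin 4 → Fin 4 → Fin 4 → ℝ,
      inner4 S C = inner4 S (kulkarniNomizu u u) + inner4 S (kulkarniNomizu (Msq u) 1)
        - (P / 6) * inner4 S (kulkarniNomizu 1 1) := fun S => by
    rw [hC]; exact inner4_comb2 S _ _ _ _
  have hWC : inner4 W C = inner4 W (kulkarniNomizu u u) := by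
    rw [hSC W, hperp (Msq u), hperp 1]; ring
  have g1 : inner4 C (kulkarniNomizu u u) = 2 * (P^2 - Rr) - 2 * Rr + P^2 / 3 := by
    rw [inner4_comm, hSC (kulkarniNomizu u u)]
    rw [inner4_comm (kulkarniNomizu u u) (kulkarniNomizu (Msq u) 1), b2]
    rw [inner4_comm (kulkarniNomizu u u) (kulkarniNomizu 1 1), b3]
    rw [b1]; ring
  have g2 : inner4 C (kulkarniNomizu (Msq u) 1) = 0 := by
    rw [inner4_comm, hSC (kulkarniNomizu (Msq u) 1)]
    rw [b2, b4]
    rw [inner4_comm (kulkarniNomizu (Msq u) 1) (kulkarniNomizu 1 1), b5]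
    ring
  have g3 : inner4 C (kulkarniNomizu 1 1) = 0 := by
    rw [inner4_comm, hSC (kulkarniNomizu 1 1)]
    rw [b3, b5, b6]; ring
  have hCC : inner4 C C = 7/3 * P^2 - 4 * Rr := by
    rw [hSC C, g1, g2, g3]; ring
  have hpnn : 0 ≤ P := by
    rw [hP]
    exact Finset.sum_nonneg fun i _ => Finset.sum_nonneg fun j _ => mul_self_nonneg _
  have hwnn : 0 ≤ inner4 W W := inner4_nonneg W
  have hccnn : 0 ≤ inner4 C C := inner4_nonneg C
  have hadd := inner4_addsmul_left W
    (kulkarniNomizu u (1 : Matrix (Fin 4) (Fin 4) ℝ)) (kulkarniNomizu u u) (1/2)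
  have hL : inner4 (fun i j k l => W i j k l +
        (1 / 2) * kulkarniNomizu u (1 : Matrix (Fin 4) (Fin 4) ℝ) i j k l)
        (kulkarniNomizu u u)
      = inner4 W (kulkarniNomizu u u) - Q := by
    rw [hadd, ha]; ring
  rw [hL, ← hWC]
  rcases eq_or_lt_of_le hpnn with hp0 | hppos
  · -- degenerate case: u = 0
    have hz : ∑ pr : Fin 4 × Fin 4, (u pr.1 pr.2)^2 = 0 := by
      have e : ∑ pr : Fin 4 × Fin 4, (u pr.1 pr.2)^2 = P := by
        rw [hP]
        simp [frob, Fintype.sum_prod_type, pow_two]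
      rw [e, ← hp0]
    have hu0 : ∀ i j, u i j = 0 := by
      intro i j
      have h := (Finset.sum_eq_zero_iff_of_nonneg
        (fun pr _ => sq_nonneg (u pr.1 pr.2))).1 hz (i, j) (Finset.mem_univ _)
      exact (pow_eq_zero_iff (by norm_num : 2 ≠ 0)).1 h
    have hk0 : kulkarniNomizu u u = fun _ _ _ _ => (0:ℝ) := by
      funext i j k l
      simp [kulkarniNomizu, hu0]
    have hWuu : inner4 W (kulkarniNomizu u u) = 0 := by
      rw [hk0]; simp [inner4]
    have hQ0 : Q = 0 := by
      rw [hQ]; simp [frob, hu0]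
    rw [hWC, hWuu, hQ0, ← hp0]
    simp [Real.sqrt_nonneg]
  · -- main case: P > 0
    set D : Matrix (Fin 4) (Fin 4) ℝ :=
      (fun i k => P * Msq u i k + (-Q) * u i k
        + (-(P^2/4)) * (1 : Matrix (Fin 4) (Fin 4) ℝ) i k) with hD
    have hDnn : 0 ≤ frob D D := by
      unfold frob
      exact Finset.sum_nonneg fun i _ => Finset.sum_nonneg fun j _ => mul_self_nonneg _
    have hDval : frob D D = P^2*Rr - P*Q^2 - P^4/4 := by
      rw [hD, frob_comb3, m1, m2, m3, m4, ← hP, ← hRr]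
      ring
    have hkey : 4*Q^2 ≤ P*(4*Rr - P^2) :=
      key_step P Q Rr (frob D D) hppos hDnn hDval
    set a := Real.sqrt (inner4 W W) with ha'
    set b := Real.sqrt (inner4 C C) with hb'
    have ha2 : a^2 = inner4 W W := Real.sq_sqrt hwnn
    have hb2 : b^2 = inner4 C C := Real.sq_sqrt hccnn
    have hann : 0 ≤ a := Real.sqrt_nonneg _
    have hbnn : 0 ≤ b := Real.sqrt_nonneg _
    have hXab : |inner4 W C| ≤ a * b := by
      have h2 : (inner4 W C)^2 ≤ (a*b)^2 := by
        rw [mul_pow, ha2, hb2]; exact inner4_cs W C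
      calc |inner4 W C| = Real.sqrt ((inner4 W C)^2) := (Real.sqrt_sq_eq_abs _).symm
        _ ≤ Real.sqrt ((a*b)^2) := Real.sqrt_le_sqrt h2
        _ = a*b := Real.sqrt_sq (mul_nonneg hann hbnn)
    have hmain : (|inner4 W C| + |Q|)^2 * P ≤ (a^2 + P/4) * (P * b^2 + 4*|Q|^2) :=
      main_step _ _ a b P hppos (abs_nonneg _) (abs_nonneg _) hann hbnn hXab
    have hkey' : 4*|Q|^2 ≤ P*(4*Rr - P^2) := by rw [sq_abs]; exact hkey
    have hsb : P * b^2 + 4*|Q|^2 ≤ 4/3 * P^3 := by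
      rw [hb2, hCC]; exact sum_step P |Q| Rr hkey'
    have h1 : (|inner4 W C| + |Q|)^2 * P ≤ (inner4 W W + P/4) * (4/3 * P^3) := by
      calc (|inner4 W C| + |Q|)^2 * P ≤ (a^2 + P/4) * (P * b^2 + 4*|Q|^2) := hmain
        _ ≤ (a^2 + P/4) * (4/3 * P^3) := by
            apply mul_le_mul_of_nonneg_left hsb
            positivity
        _ = (inner4 W W + P/4) * (4/3 * P^3) := by rw [ha2]
    have hfin2 : (|inner4 W C| + |Q|)^2 ≤ 4/3 * P^2 * (inner4 W W + 1/4 * P) :=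
      div_step _ P (inner4 W W) hppos h1
    have hRnn : 0 ≤ 2 / Real.sqrt 3 * P * Real.sqrt (inner4 W W + 1/4 * P) := by
      positivity
    have hR2 : (2 / Real.sqrt 3 * P * Real.sqrt (inner4 W W + 1/4 * P))^2
        = 4/3 * P^2 * (inner4 W W + 1/4 * P) := by
      rw [mul_pow, mul_pow, div_pow, Real.sq_sqrt (by norm_num : (0:ℝ) ≤ 3),
        Real.sq_sqrt (by positivity : (0:ℝ) ≤ inner4 W W + 1/4*P)]
      ring
    have htri : |inner4 W C - Q| ≤ |inner4 W C| + |Q| := by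
      rw [sub_eq_add_neg]
      exact (abs_add_le _ _).trans (by rw [abs_neg])
    calc |inner4 W C - Q| ≤ |inner4 W C| + |Q| := htri
      _ = Real.sqrt ((|inner4 W C| + |Q|)^2) :=
          (Real.sqrt_sq (by positivity)).symm
      _ ≤ Real.sqrt ((2 / Real.sqrt 3 * P * Real.sqrt (inner4 W W + 1/4 * P))^2) :=
          Real.sqrt_le_sqrt (by rw [hR2]; exact hfin2)
      _ = 2 / Real.sqrt 3 * P * Real.sqrt (inner4 W W + 1/4 * P) := Real.sqrt_sq hRnn
end

section
/- Let n ≥ 3, let p be a real number with p > n/2, and let A > 0. There exists a constant C depending only on n and p with the following property. Let R : ℝⁿ → ℝ be a measurable function with ‖R‖_p < ∞, and suppose that every smooth compactly supported u : ℝⁿ → ℝ satisfies ‖u‖_{2n/(n−2)}² ≤ (A²/2)·( ‖∇u‖₂² + ((n−2)/(4(n−1))) ∫ R u² ). Then every smooth compactly supported u : ℝⁿ → ℝ satisfies ‖u‖_{2n/(n−2)} ≤ A‖∇u‖₂ + (C·A²·‖R‖_p)^{p/(2p−n)}·‖u‖₂. -/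
open MeasureTheory
open scoped ENNReal NNReal

set_option maxHeartbeats 1000000 in
theorem stmt14 (n : ℕ) (hn : 3 ≤ n) (p : ℝ) (hp : (n : ℝ) / 2 < p) :
    ∃ C : ℝ, ∀ A : ℝ, 0 < A →
      ∀ R : EuclideanSpace ℝ (Fin n) → ℝ, Measurable R →
        eLpNorm R (ENNReal.ofReal p) volume < ⊤ →
        (∀ u : EuclideanSpace ℝ (Fin n) → ℝ, ContDiff ℝ (⊤ : ℕ∞) u → HasCompactSupport u →
          (lpN n (2 * (n : ℝ) / ((n : ℝ) - 2)) u) ^ 2 ≤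
            (A ^ 2 / 2) * ((dLpN n 1 2 u) ^ 2 +
              (((n : ℝ) - 2) / (4 * ((n : ℝ) - 1))) * ∫ x, R x * (u x) ^ 2)) →
        ∀ u : EuclideanSpace ℝ (Fin n) → ℝ, ContDiff ℝ (⊤ : ℕ∞) u → HasCompactSupport u →
          lpN n (2 * (n : ℝ) / ((n : ℝ) - 2)) u ≤
            A * dLpN n 1 2 u +
              (C * A ^ 2 * lpN n p R) ^ (p / (2 * p - (n : ℝ))) * lpN n 2 u := by
  have hn3 : (3 : ℝ) ≤ (n : ℝ) := by exact_mod_cast hn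
  have hp0 : (0 : ℝ) < p := by linarith
  have h2pn : (0 : ℝ) < 2 * p - n := by linarith
  have hn2 : (0 : ℝ) < (n : ℝ) - 2 := by linarith
  set t : ℝ := (2 * p - n) / (2 * p) with ht_def
  have ht0 : 0 < t := div_pos h2pn (by linarith)
  have ht1 : t < 1 := by
    rw [ht_def]
    exact (div_lt_one (by linarith)).mpr (by linarith)
  have h1t : 0 < 1 - t := by linarith
  set c : ℝ := ((n : ℝ) - 2) / (4 * ((n : ℝ) - 1)) with hc_def
  have hc : 0 < c := div_pos (by linarith) (by linarith)
  refine ⟨(c * t) ^ t * (c * (1 - t)) ^ (1 - t), ?_⟩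
  intro A hA R hRmeas hRfin hyp u hu hsupp
  set C : ℝ := (c * t) ^ t * (c * (1 - t)) ^ (1 - t) with hC_def
  have hC : 0 < C :=
    mul_pos (Real.rpow_pos_of_pos (mul_pos hc ht0) _)
      (Real.rpow_pos_of_pos (mul_pos hc h1t) _)
  set N : ℝ := lpN n (2 * (n : ℝ) / ((n : ℝ) - 2)) u with hN_def
  set D : ℝ := dLpN n 1 2 u with hD_def
  set M : ℝ := lpN n 2 u with hM_def
  set r : ℝ := lpN n p R with hr_def
  have hN0 : 0 ≤ N := ENNReal.toReal_nonneg
  have hD0 : 0 ≤ D := ENNReal.toReal_nonneg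
  have hM0 : 0 ≤ M := ENNReal.toReal_nonneg
  have hr0 : 0 ≤ r := ENNReal.toReal_nonneg
  have hq2pos : (0 : ℝ) < 2 * (n : ℝ) / ((n : ℝ) - 2) := by positivity
  have hq2w : (2 * (n : ℝ) / ((n : ℝ) - 2)) * (((n : ℝ) - 2) / (2 * p)) = 2 * (1 - t) := by
    rw [ht_def]; field_simp; ring
  -- the integral bound via Hölder
  have hI : ∫ x, R x * u x ^ 2 ≤ r * M ^ (2 * t) * N ^ (2 * (1 - t)) := by
    have hucont := hu.continuous
    have humeas := hucont.measurable
    have h2fin : eLpNorm u (ENNReal.ofReal 2) volume ≠ ⊤ :=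
      (hucont.memLp_of_hasCompactSupport hsupp).eLpNorm_lt_top.ne
    have hqfin : eLpNorm u (ENNReal.ofReal (2 * (n : ℝ) / ((n : ℝ) - 2))) volume ≠ ⊤ :=
      (hucont.memLp_of_hasCompactSupport hsupp).eLpNorm_lt_top.ne
    set F : Fin 3 → EuclideanSpace ℝ (Fin n) → ℝ≥0∞ :=
      ![fun x => (‖R x‖₊ : ℝ≥0∞) ^ p,
        fun x => (‖u x‖₊ : ℝ≥0∞) ^ (2 : ℝ),
        fun x => (‖u x‖₊ : ℝ≥0∞) ^ (2 * (n : ℝ) / ((n : ℝ) - 2))] with hF_def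
    set w : Fin 3 → ℝ := ![1 / p, t, ((n : ℝ) - 2) / (2 * p)] with hw_def
    have hmeasF : ∀ i ∈ Finset.univ, AEMeasurable (F i) volume := by
      intro i _
      fin_cases i <;> simp only [hF_def, Matrix.cons_val_zero, Matrix.cons_val_one,
        Matrix.head_cons, Matrix.cons_val_two, Matrix.tail_cons, Fin.mk_zero, Fin.mk_one]
      · exact (ENNReal.continuous_rpow_const.measurable.comp hRmeas.enorm).aemeasurable
      · exact (ENNReal.continuous_rpow_const.measurable.comp humeas.enorm).aemeasurable
      · exact (ENNReal.continuous_rpow_const.measurable.comp humeas.enorm).aemeasurable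
    have hw_sum : ∑ i, w i = 1 := by
      simp only [hw_def, Fin.sum_univ_three, Matrix.cons_val_zero, Matrix.cons_val_one,
        Matrix.head_cons, Matrix.cons_val_two, Matrix.tail_cons]
      rw [ht_def]; field_simp; ring
    have hw_nonneg : ∀ i ∈ Finset.univ, 0 ≤ w i := by
      intro i _
      fin_cases i <;> simp only [hw_def, Matrix.cons_val_zero, Matrix.cons_val_one,
        Matrix.head_cons, Matrix.cons_val_two, Matrix.tail_cons, Fin.mk_zero, Fin.mk_one]
      · exact one_div_nonneg.mpr hp0.le
      · exact ht0.le
      · exact div_nonneg (by linarith) (by linarith)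
    have H := ENNReal.lintegral_prod_norm_pow_le (μ := volume) Finset.univ hmeasF hw_sum hw_nonneg
    have hL : ∀ x, ∏ i, F i x ^ w i = (‖R x‖₊ : ℝ≥0∞) * (‖u x‖₊ : ℝ≥0∞) ^ (2 : ℝ) := by
      intro x
      rw [Fin.prod_univ_three]
      simp only [hF_def, hw_def, Matrix.cons_val_zero, Matrix.cons_val_one,
        Matrix.head_cons, Matrix.cons_val_two, Matrix.tail_cons]
      rw [← ENNReal.rpow_mul, ← ENNReal.rpow_mul, ← ENNReal.rpow_mul, hq2w,
        mul_assoc, ← ENNReal.rpow_add_of_nonneg (2 * t) (2 * (1 - t)) (by linarith) (by linarith),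
        show p * (1 / p) = 1 by field_simp, ENNReal.rpow_one,
        show (2 : ℝ) * t + 2 * (1 - t) = 2 by ring]
    have eR : eLpNorm R (ENNReal.ofReal p) volume
        = (∫⁻ x, (‖R x‖₊ : ℝ≥0∞) ^ p ∂volume) ^ (1 / p) := by
      rw [eLpNorm_eq_lintegral_rpow_enorm_toReal (by simp [ENNReal.ofReal_eq_zero]; linarith)
        ENNReal.ofReal_ne_top, ENNReal.toReal_ofReal hp0.le]
      rfl
    have eU2 : eLpNorm u (ENNReal.ofReal 2) volume
        = (∫⁻ x, (‖u x‖₊ : ℝ≥0∞) ^ (2 : ℝ) ∂volume) ^ (1 / (2 : ℝ)) := by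
      rw [eLpNorm_eq_lintegral_rpow_enorm_toReal (by simp [ENNReal.ofReal_eq_zero])
        ENNReal.ofReal_ne_top, ENNReal.toReal_ofReal (by norm_num)]
      rfl
    have eUq : eLpNorm u (ENNReal.ofReal (2 * (n : ℝ) / ((n : ℝ) - 2))) volume
        = (∫⁻ x, (‖u x‖₊ : ℝ≥0∞) ^ (2 * (n : ℝ) / ((n : ℝ) - 2)) ∂volume)
            ^ (1 / (2 * (n : ℝ) / ((n : ℝ) - 2))) := by
      rw [eLpNorm_eq_lintegral_rpow_enorm_toReal (by simp [ENNReal.ofReal_eq_zero]; linarith)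
        ENNReal.ofReal_ne_top, ENNReal.toReal_ofReal hq2pos.le]
      rfl
    have hRHS : ∏ i, (∫⁻ x, F i x ∂volume) ^ w i =
        eLpNorm R (ENNReal.ofReal p) volume *
          (eLpNorm u (ENNReal.ofReal 2) volume) ^ (2 * t) *
          (eLpNorm u (ENNReal.ofReal (2 * (n : ℝ) / ((n : ℝ) - 2))) volume) ^ (2 * (1 - t)) := by
      rw [Fin.prod_univ_three]
      simp only [hF_def, hw_def, Matrix.cons_val_zero, Matrix.cons_val_one,
        Matrix.head_cons, Matrix.cons_val_two, Matrix.tail_cons]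
      rw [eR, eU2, eUq, ← ENNReal.rpow_mul, ← ENNReal.rpow_mul,
        show (1 : ℝ) / 2 * (2 * t) = t by ring,
        show 1 / (2 * (n : ℝ) / ((n : ℝ) - 2)) * (2 * (1 - t)) = ((n : ℝ) - 2) / (2 * p) by
          rw [ht_def]; field_simp; ring]
    have Hle : ∫⁻ x, (‖R x‖₊ : ℝ≥0∞) * (‖u x‖₊ : ℝ≥0∞) ^ (2 : ℝ) ∂volume ≤
        eLpNorm R (ENNReal.ofReal p) volume *
          (eLpNorm u (ENNReal.ofReal 2) volume) ^ (2 * t) *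
          (eLpNorm u (ENNReal.ofReal (2 * (n : ℝ) / ((n : ℝ) - 2))) volume) ^ (2 * (1 - t)) := by
      calc ∫⁻ x, (‖R x‖₊ : ℝ≥0∞) * (‖u x‖₊ : ℝ≥0∞) ^ (2 : ℝ) ∂volume
          = ∫⁻ x, ∏ i, F i x ^ w i ∂volume := lintegral_congr fun x => (hL x).symm
        _ ≤ ∏ i, (∫⁻ x, F i x ∂volume) ^ w i := H
        _ = _ := hRHS
    have hfinRHS : eLpNorm R (ENNReal.ofReal p) volume *
          (eLpNorm u (ENNReal.ofReal 2) volume) ^ (2 * t) *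
          (eLpNorm u (ENNReal.ofReal (2 * (n : ℝ) / ((n : ℝ) - 2))) volume) ^ (2 * (1 - t)) ≠ ⊤ :=
      ENNReal.mul_ne_top
        (ENNReal.mul_ne_top hRfin.ne (ENNReal.rpow_ne_top_of_nonneg (by linarith) h2fin))
        (ENNReal.rpow_ne_top_of_nonneg (by linarith) hqfin)
    calc ∫ x, R x * u x ^ 2 ≤ ‖∫ x, R x * u x ^ 2‖ := Real.le_norm_self _
      _ ≤ (∫⁻ x, ENNReal.ofReal ‖R x * u x ^ 2‖ ∂volume).toReal := norm_integral_le_lintegral_norm _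
      _ = (∫⁻ x, (‖R x‖₊ : ℝ≥0∞) * (‖u x‖₊ : ℝ≥0∞) ^ (2 : ℝ) ∂volume).toReal := by
          congr 1
          apply lintegral_congr
          intro x
          rw [ofReal_norm_eq_enorm, enorm_eq_nnnorm, nnnorm_mul, nnnorm_pow, ENNReal.coe_mul, ENNReal.coe_pow,
            ← ENNReal.rpow_natCast (‖u x‖₊ : ℝ≥0∞) 2]
          norm_num
      _ ≤ (eLpNorm R (ENNReal.ofReal p) volume *
            (eLpNorm u (ENNReal.ofReal 2) volume) ^ (2 * t) *
            (eLpNorm u (ENNReal.ofReal (2 * (n : ℝ) / ((n : ℝ) - 2))) volume) ^ (2 * (1 - t))).toReal :=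
          ENNReal.toReal_mono hfinRHS Hle
      _ = r * M ^ (2 * t) * N ^ (2 * (1 - t)) := by
          rw [ENNReal.toReal_mul, ENNReal.toReal_mul, ← ENNReal.toReal_rpow, ← ENNReal.toReal_rpow]
          rfl
  -- Young / weighted AM-GM
  set lam : ℝ := (A ^ 2 * c * (1 - t))⁻¹ with hlam_def
  have hlam : 0 < lam := by positivity
  set X : ℝ := r ^ (1 / t) * lam ^ (-(1 - t) / t) with hX_def
  have hX0 : 0 ≤ X := by positivity
  have hYoung : r * M ^ (2 * t) * N ^ (2 * (1 - t)) ≤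
      t * (X * M ^ 2) + (1 - t) * (lam * N ^ 2) := by
    have h := Real.geom_mean_le_arith_mean2_weighted (w₁ := t) (w₂ := 1 - t)
      (p₁ := X * M ^ 2) (p₂ := lam * N ^ 2)
      ht0.le h1t.le (by positivity) (by positivity) (by ring)
    have e1 : (r ^ (1 / t)) ^ t = r := by
      rw [← Real.rpow_mul hr0, one_div, inv_mul_cancel₀ ht0.ne', Real.rpow_one]
    have e2 : (lam ^ (-(1 - t) / t)) ^ t * lam ^ (1 - t) = 1 := by
      rw [← Real.rpow_mul hlam.le, ← Real.rpow_add hlam,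
        show -(1 - t) / t * t + (1 - t) = 0 by field_simp; ring, Real.rpow_zero]
    have e3 : ((M : ℝ) ^ 2) ^ t = M ^ (2 * t) := by
      rw [← Real.rpow_natCast M 2, ← Real.rpow_mul hM0]
      norm_num
    have e4 : ((N : ℝ) ^ 2) ^ (1 - t) = N ^ (2 * (1 - t)) := by
      rw [← Real.rpow_natCast N 2, ← Real.rpow_mul hN0]
      norm_num
    have hmain : (X * M ^ 2) ^ t * (lam * N ^ 2) ^ (1 - t)
        = r * M ^ (2 * t) * N ^ (2 * (1 - t)) := by
      rw [hX_def, Real.mul_rpow (by positivity) (by positivity),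
        Real.mul_rpow (by positivity) (by positivity),
        Real.mul_rpow hlam.le (by positivity), e1, e3, e4]
      calc r * (lam ^ (-(1 - t) / t)) ^ t * M ^ (2 * t) * (lam ^ (1 - t) * N ^ (2 * (1 - t)))
          = r * M ^ (2 * t) * N ^ (2 * (1 - t)) *
              ((lam ^ (-(1 - t) / t)) ^ t * lam ^ (1 - t)) := by ring
        _ = r * M ^ (2 * t) * N ^ (2 * (1 - t)) := by rw [e2, mul_one]
    rw [hmain] at h
    exact h
  -- the constant identity
  set B : ℝ := (C * A ^ 2 * r) ^ (p / (2 * p - (n : ℝ))) with hB_def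
  have hB0 : 0 ≤ B := Real.rpow_nonneg (by positivity) _
  have hB2 : B ^ 2 = A ^ 2 * c * (t * X) := by
    have hz : (0 : ℝ) < A ^ 2 * c * (1 - t) := by positivity
    have hlam_rw : lam ^ (-(1 - t) / t) = (A ^ 2 * c * (1 - t)) ^ ((1 - t) / t) := by
      rw [show -(1 - t) / t = -((1 - t) / t) by ring, Real.rpow_neg hlam.le, hlam_def,
        Real.inv_rpow hz.le, inv_inv]
    have h1t_id : 1 / t = 1 + (1 - t) / t := by field_simp; ring
    have hB2' : B ^ 2 = (C * A ^ 2 * r) ^ (1 / t) := by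
      rw [hB_def, ← Real.rpow_natCast _ 2, ← Real.rpow_mul (by positivity)]
      congr 1
      push_cast
      rw [ht_def]
      field_simp
    have hA2 : ((A : ℝ) ^ 2) ^ ((1 : ℝ) / t) = A ^ 2 * (A ^ 2) ^ ((1 - t) / t) := by
      rw [h1t_id, Real.rpow_add (by positivity), Real.rpow_one]
    have hz_rw : (A ^ 2 * c * (1 - t)) ^ ((1 - t) / t)
        = (A ^ 2) ^ ((1 - t) / t) * (c * (1 - t)) ^ ((1 - t) / t) := by
      rw [show A ^ 2 * c * (1 - t) = A ^ 2 * (c * (1 - t)) by ring,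
        Real.mul_rpow (by positivity) (by positivity)]
    rw [hB2', hX_def, hlam_rw, hz_rw,
      Real.mul_rpow (by positivity) hr0, Real.mul_rpow (by positivity) (by positivity),
      hC_def, Real.mul_rpow (by positivity) (by positivity),
      ← Real.rpow_mul (by positivity), ← Real.rpow_mul (by positivity),
      show t * (1 / t) = 1 by field_simp, Real.rpow_one,
      show (1 - t) * (1 / t) = (1 - t) / t by ring, hA2]
    ring
  -- combine with the hypothesis
  have hhyp := hyp u hu hsupp
  have hkey : N ^ 2 ≤ A ^ 2 * D ^ 2 + B ^ 2 * M ^ 2 := by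
    have hIc : (∫ x, R x * u x ^ 2) ≤ t * (X * M ^ 2) + (1 - t) * (lam * N ^ 2) :=
      le_trans hI hYoung
    have habs : A ^ 2 / 2 * (c * ((1 - t) * (lam * N ^ 2))) = N ^ 2 / 2 := by
      rw [hlam_def]
      field_simp
    have hstep : N ^ 2 ≤ A ^ 2 / 2 * D ^ 2 + A ^ 2 / 2 * (c * (t * (X * M ^ 2))) + N ^ 2 / 2 := by
      calc N ^ 2 ≤ A ^ 2 / 2 * (D ^ 2 + c * ∫ x, R x * u x ^ 2) := hhyp
        _ ≤ A ^ 2 / 2 * (D ^ 2 + c * (t * (X * M ^ 2) + (1 - t) * (lam * N ^ 2))) := by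
            apply mul_le_mul_of_nonneg_left _ (by positivity)
            have := mul_le_mul_of_nonneg_left hIc hc.le
            linarith
        _ = A ^ 2 / 2 * D ^ 2 + A ^ 2 / 2 * (c * (t * (X * M ^ 2)))
              + A ^ 2 / 2 * (c * ((1 - t) * (lam * N ^ 2))) := by ring
        _ = A ^ 2 / 2 * D ^ 2 + A ^ 2 / 2 * (c * (t * (X * M ^ 2))) + N ^ 2 / 2 := by
            rw [habs]
    have hBXM : A ^ 2 / 2 * (c * (t * (X * M ^ 2))) = B ^ 2 * M ^ 2 / 2 := by
      rw [hB2]; ring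
    linarith
  have h1 : N ^ 2 ≤ (A * D + B * M) ^ 2 := by
    nlinarith [mul_nonneg (mul_nonneg hA.le hD0) (mul_nonneg hB0 hM0)]
  have h2 : 0 ≤ A * D + B * M := by positivity
  calc N = Real.sqrt (N ^ 2) := (Real.sqrt_sq hN0).symm
    _ ≤ Real.sqrt ((A * D + B * M) ^ 2) := Real.sqrt_le_sqrt h1
    _ = A * D + B * M := Real.sqrt_sq h2
end
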